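/- arXiv:math/0608694 — 11 statements merged into one kernel-verified Lean document; each statement's English description precedes it below -/
import Mathlib

section
/- Let V be a finite-dimensional complex vector space, q ∈ ℂ nonzero with q^2 ≠ 1, and let A, A* be linear operators on V. Suppose V decomposes as a direct sum V = V_0 ⊕ V_1 ⊕ ... ⊕ V_D where V_i is the eigenspace of A with eigenvalue q^{D-2i}, and suppose that for all 0 ≤ i, j ≤ D with |i-j| > 1 we have E_i A* E_j = 0, where E_i denotes the projection onto V_i along the other summands. Then A^3 A* - [3]_q A^2 A* A + [3]_q A A* A^2 - A* A^3 = 0, where [3]_q = (q^3-q^{-3})/(q-q^{-1}). -/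
open scoped BigOperators

theorem stmt_2 (V : Type) [AddCommGroup V] [Module ℂ V] [FiniteDimensional ℂ V]
    (q : ℂ) (hq : q ≠ 0) (hq2 : q ^ 2 ≠ 1) (D : ℕ)
    (A Astar : Module.End ℂ V) (E : ℕ → Module.End ℂ V)
    (hsum : ∑ i ∈ Finset.range (D + 1), E i = 1)
    (hid : ∀ i j, i ≤ D → j ≤ D → E i * E j = if i = j then E i else 0)
    (heig : ∀ i, i ≤ D → A * E i = (q ^ ((D : ℤ) - 2 * i)) • E i)
    (htri : ∀ i j, i ≤ D → j ≤ D → 1 < |(i : ℤ) - (j : ℤ)| → E i * Astar * E j = 0) :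
    A ^ 3 * Astar
      - ((q ^ 3 - q⁻¹ ^ 3) / (q - q⁻¹)) • (A ^ 2 * Astar * A)
      + ((q ^ 3 - q⁻¹ ^ 3) / (q - q⁻¹)) • (A * Astar * A ^ 2)
      - Astar * A ^ 3 = 0 := by
  set c : ℂ := (q ^ 3 - q⁻¹ ^ 3) / (q - q⁻¹) with hc
  set X : Module.End ℂ V :=
    A ^ 3 * Astar - c • (A ^ 2 * Astar * A) + c • (A * Astar * A ^ 2) - Astar * A ^ 3 with hX
  have hinv : q * q⁻¹ = 1 := mul_inv_cancel₀ hq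
  have hqq : q - q⁻¹ ≠ 0 := by
    intro h
    apply hq2
    have h1 : q = q⁻¹ := sub_eq_zero.mp h
    calc q ^ 2 = q * q := sq q
    _ = q * q⁻¹ := by rw [← h1]
    _ = 1 := hinv
  have hc' : c = q ^ 2 + 1 + q⁻¹ ^ 2 := by
    rw [hc, div_eq_iff hqq]
    field_simp
    ring
  set θ : ℕ → ℂ := fun i => q ^ ((D : ℤ) - 2 * i) with hθ
  have heig' : ∀ k, k ≤ D → A * E k = θ k • E k := heig
  have hm2 : q ^ (-2 : ℤ) = q⁻¹ ^ 2 := by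
    rw [zpow_neg]
    norm_num
  have hAE : A = ∑ j ∈ Finset.range (D + 1), θ j • E j := by
    calc A = A * 1 := (mul_one A).symm
    _ = ∑ j ∈ Finset.range (D + 1), A * E j := by rw [← hsum, Finset.mul_sum]
    _ = _ := Finset.sum_congr rfl fun j hj =>
        heig' j (Nat.lt_succ_iff.mp (Finset.mem_range.mp hj))
  have hEA : ∀ i, i ≤ D → E i * A = θ i • E i := by
    intro i hi
    rw [hAE, Finset.mul_sum]
    rw [Finset.sum_eq_single i]
    · rw [mul_smul_comm, hid i i hi hi, if_pos rfl]
    · intro j hj hji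
      rw [mul_smul_comm, hid i j hi (Nat.lt_succ_iff.mp (Finset.mem_range.mp hj)),
        if_neg (fun h => hji h.symm), smul_zero]
    · intro h
      exact absurd (Finset.mem_range.mpr (Nat.lt_succ_of_le hi)) h
  have key : ∀ i j, i ≤ D → j ≤ D → E i * X * E j = 0 := by
    intro i j hi hj
    have hApow : ∀ n : ℕ, A ^ n * E j = (θ j ^ n) • E j := by
      intro n
      induction n with
      | zero => simp
      | succ n ih =>
        rw [pow_succ, mul_assoc, heig' j hj, mul_smul_comm, ih, smul_smul, ← pow_succ']
    have hEpow : ∀ n : ℕ, E i * A ^ n = (θ i ^ n) • E i := by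
      intro n
      induction n with
      | zero => simp
      | succ n ih =>
        rw [pow_succ, ← mul_assoc, ih, smul_mul_assoc, hEA i hi, smul_smul, ← pow_succ]
    have u1 : E i * (A ^ 3 * Astar) * E j = (θ i ^ 3) • (E i * (Astar * E j)) := by
      calc E i * (A ^ 3 * Astar) * E j = (E i * A ^ 3) * (Astar * E j) := by
            simp only [mul_assoc]
      _ = _ := by rw [hEpow 3, smul_mul_assoc]
    have u2 : E i * (A ^ 2 * Astar * A) * E j
        = (θ j * θ i ^ 2) • (E i * (Astar * E j)) := by
      calc E i * (A ^ 2 * Astar * A) * E j = (E i * A ^ 2) * (Astar * (A * E j)) := by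
            simp only [mul_assoc]
      _ = (θ i ^ 2 • E i) * (Astar * (θ j • E j)) := by rw [hEpow 2, heig' j hj]
      _ = _ := by rw [mul_smul_comm, mul_smul_comm, smul_mul_assoc, smul_smul]
    have u3 : E i * (A * Astar * A ^ 2) * E j
        = (θ j ^ 2 * θ i) • (E i * (Astar * E j)) := by
      calc E i * (A * Astar * A ^ 2) * E j = (E i * A) * (Astar * (A ^ 2 * E j)) := by
            simp only [mul_assoc]
      _ = (θ i • E i) * (Astar * (θ j ^ 2 • E j)) := by rw [hEA i hi, hApow 2]
      _ = _ := by rw [mul_smul_comm, mul_smul_comm, smul_mul_assoc, smul_smul]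
    have u4 : E i * (Astar * A ^ 3) * E j = (θ j ^ 3) • (E i * (Astar * E j)) := by
      calc E i * (Astar * A ^ 3) * E j = E i * (Astar * (A ^ 3 * E j)) := by
            simp only [mul_assoc]
      _ = _ := by rw [hApow 3, mul_smul_comm, mul_smul_comm]
    have hexp : E i * X * E j
        = (θ i ^ 3 - c * (θ i ^ 2 * θ j) + c * (θ i * θ j ^ 2) - θ j ^ 3) •
          (E i * (Astar * E j)) := by
      rw [hX]
      simp only [mul_sub, mul_add, sub_mul, add_mul, mul_smul_comm, smul_mul_assoc]
      rw [u1, u2, u3, u4]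
      module
    by_cases hfar : 1 < |(i : ℤ) - (j : ℤ)|
    · rw [hexp, show E i * (Astar * E j) = 0 from by
        rw [← mul_assoc]; exact htri i j hi hj hfar, smul_zero]
    · rw [hexp]
      have hiz : θ i ^ 3 - c * (θ i ^ 2 * θ j) + c * (θ i * θ j ^ 2) - θ j ^ 3 = 0 := by
        have hcase : j = i ∨ j = i + 1 ∨ i = j + 1 := by
          rcases abs_le.mp (not_lt.mp hfar) with ⟨h1, h2⟩
          omega
        rcases hcase with h | h | h
        · subst h; ring
        · have hTj : θ j = θ i * q⁻¹ ^ 2 := by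
            subst h
            show q ^ ((D : ℤ) - 2 * ((i + 1 : ℕ) : ℤ)) = q ^ ((D : ℤ) - 2 * i) * q⁻¹ ^ 2
            rw [show ((D : ℤ) - 2 * ((i + 1 : ℕ) : ℤ)) = ((D : ℤ) - 2 * i) + (-2) from by
              push_cast; ring, zpow_add₀ hq, hm2]
          rw [hTj, hc']
          linear_combination (θ i ^ 3 * (q⁻¹ ^ 2 - 1) * (q * q⁻¹ + 1)) * hinv
        · have hTi : θ i = θ j * q⁻¹ ^ 2 := by
            subst h
            show q ^ ((D : ℤ) - 2 * ((j + 1 : ℕ) : ℤ)) = q ^ ((D : ℤ) - 2 * j) * q⁻¹ ^ 2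
            rw [show ((D : ℤ) - 2 * ((j + 1 : ℕ) : ℤ)) = ((D : ℤ) - 2 * j) + (-2) from by
              push_cast; ring, zpow_add₀ hq, hm2]
          rw [hTi, hc']
          linear_combination (θ j ^ 3 * (1 - q⁻¹ ^ 2) * (q * q⁻¹ + 1)) * hinv
      rw [hiz, zero_smul]
  have hX0 : X = 0 := by
    have h0 : X = (∑ i ∈ Finset.range (D + 1), E i) * X * (∑ j ∈ Finset.range (D + 1), E j) := by
      rw [hsum, one_mul, mul_one]
    rw [h0, Finset.sum_mul, Finset.sum_mul]
    apply Finset.sum_eq_zero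
    intro i hi
    rw [Finset.mul_sum]
    apply Finset.sum_eq_zero
    intro j hj
    exact key i j (Nat.lt_succ_iff.mp (Finset.mem_range.mp hi))
      (Nat.lt_succ_iff.mp (Finset.mem_range.mp hj))
  exact hX0
end

section
/- Let V be a finite-dimensional complex vector space and q ∈ ℂ nonzero with q^2 ≠ 1. Let A, A* be operators on V such that A is semisimple with distinct eigenvalues θ_0 > θ_1 > ... > θ_D of the form θ_i = α_0 + α_1 q^{D-2i} (α_1 ≠ 0), and such that A* acts tridiagonally with respect to the eigenspace decomposition of A (i.e. the component of A* mapping the θ_j-eigenspace to the θ_i-eigenspace vanishes when |i-j| > 1). Then B := (A - α_0)/α_1 and A* satisfy B^3 A* - [3]_q B^2 A* B + [3]_q B A* B^2 - A* B^3 = 0. -/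
open scoped BigOperators

theorem stmt_3 (V : Type) [AddCommGroup V] [Module ℂ V] [FiniteDimensional ℂ V]
    (q : ℂ) (hq : q ≠ 0) (hq2 : q ^ 2 ≠ 1) (D : ℕ)
    (α₀ α₁ : ℂ) (hα₁ : α₁ ≠ 0)
    (A Astar : Module.End ℂ V) (E : ℕ → Module.End ℂ V)
    (hsum : ∑ i ∈ Finset.range (D + 1), E i = 1)
    (hid : ∀ i j, i ≤ D → j ≤ D → E i * E j = if i = j then E i else 0)
    (hA : A = ∑ i ∈ Finset.range (D + 1), (α₀ + α₁ * q ^ ((D : ℤ) - 2 * i)) • E i)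
    (htri : ∀ i j, i ≤ D → j ≤ D → 1 < |(i : ℤ) - (j : ℤ)| → E i * Astar * E j = 0) :
    (α₁⁻¹ • (A - α₀ • 1)) ^ 3 * Astar
      - ((q ^ 3 - q⁻¹ ^ 3) / (q - q⁻¹)) • ((α₁⁻¹ • (A - α₀ • 1)) ^ 2 * Astar * (α₁⁻¹ • (A - α₀ • 1)))
      + ((q ^ 3 - q⁻¹ ^ 3) / (q - q⁻¹)) • ((α₁⁻¹ • (A - α₀ • 1)) * Astar * (α₁⁻¹ • (A - α₀ • 1)) ^ 2)
      - Astar * (α₁⁻¹ • (A - α₀ • 1)) ^ 3 = 0 := by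
  set c : ℂ := (q ^ 3 - q⁻¹ ^ 3) / (q - q⁻¹) with hc
  set B : Module.End ℂ V := α₁⁻¹ • (A - α₀ • 1) with hBdef
  set θ : ℕ → ℂ := fun i => q ^ ((D : ℤ) - 2 * i) with hθ
  have hqu : q * q⁻¹ = 1 := mul_inv_cancel₀ hq
  have hsub : q - q⁻¹ ≠ 0 := by
    intro h
    apply hq2
    have h1 : q = q⁻¹ := sub_eq_zero.mp h
    have : q * q = q * q⁻¹ := by rw [← h1]
    rw [hqu] at this
    rw [sq]; exact this
  have hc2 : c = q ^ 2 + 1 + q⁻¹ ^ 2 := by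
    rw [hc, div_eq_iff hsub]
    field_simp
    ring
  -- B as a sum of projections
  have hB : B = ∑ i ∈ Finset.range (D + 1), θ i • E i := by
    rw [hBdef, hA, ← hsum, Finset.smul_sum, ← Finset.sum_sub_distrib, Finset.smul_sum]
    refine Finset.sum_congr rfl fun i _ => ?_
    rw [← sub_smul, smul_smul]
    congr 1
    field_simp
    simp only [hθ]; ring
  have hEB : ∀ i ∈ Finset.range (D + 1), E i * B = θ i • E i := by
    intro i hi
    rw [hB, Finset.mul_sum]
    rw [Finset.sum_eq_single i]
    · rw [mul_smul_comm, hid i i (by simp at hi; omega) (by simp at hi; omega), if_pos rfl]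
    · intro j hj hne
      rw [mul_smul_comm, hid i j (by simp at hi; omega) (by simp at hj; omega),
        if_neg (Ne.symm hne), smul_zero]
    · intro h; exact absurd hi h
  have hBE : ∀ j ∈ Finset.range (D + 1), B * E j = θ j • E j := by
    intro j hj
    rw [hB, Finset.sum_mul]
    rw [Finset.sum_eq_single j]
    · rw [smul_mul_assoc, hid j j (by simp at hj; omega) (by simp at hj; omega), if_pos rfl]
    · intro i hi hne
      rw [smul_mul_assoc, hid i j (by simp at hi; omega) (by simp at hj; omega),
        if_neg hne, smul_zero]
    · intro h; exact absurd hj h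
  set X : Module.End ℂ V :=
    B ^ 3 * Astar - c • (B ^ 2 * Astar * B) + c • (B * Astar * B ^ 2) - Astar * B ^ 3 with hX
  have hXrw : X = (∑ i ∈ Finset.range (D + 1), E i) * X * (∑ j ∈ Finset.range (D + 1), E j) := by
    rw [hsum, one_mul, mul_one]
  rw [hXrw, Finset.sum_mul, Finset.sum_mul]
  refine Finset.sum_eq_zero fun i hi => ?_
  rw [Finset.mul_sum]
  refine Finset.sum_eq_zero fun j hj => ?_
  have L1 : ∀ Z : Module.End ℂ V, E i * (B * Z) = θ i • (E i * Z) := by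
    intro Z
    rw [← mul_assoc, hEB i hi, smul_mul_assoc]
  have L2 : B * E j = θ j • E j := hBE j hj
  have hterm : E i * X * E j
      = (θ i ^ 3 - c * (θ i ^ 2 * θ j) + c * (θ i * θ j ^ 2) - θ j ^ 3) • (E i * Astar * E j) := by
    rw [hX]
    simp only [pow_succ, pow_zero, one_mul, mul_sub, sub_mul, mul_add, add_mul,
      mul_smul_comm, smul_mul_assoc, mul_assoc, L1, L2]
    module
  rw [hterm]
  by_cases hfar : 1 < |(i : ℤ) - (j : ℤ)|
  · rw [htri i j (by simp at hi; omega) (by simp at hj; omega) hfar, smul_zero]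
  · have hcases : j = i ∨ j = i + 1 ∨ i = j + 1 := by
      rw [not_lt, abs_le] at hfar
      simp only [Finset.mem_range] at hi hj
      omega
    have hθsucc : ∀ k : ℕ, θ (k + 1) = θ k * q⁻¹ ^ 2 := by
      intro k
      have : (D : ℤ) - 2 * (k + 1 : ℕ) = ((D : ℤ) - 2 * k) + (-2) := by push_cast; ring
      rw [hθ]
      simp only
      rw [this, zpow_add₀ hq]
      congr 1
      rw [zpow_neg, ← inv_zpow]
      norm_cast

    suffices h : θ i ^ 3 - c * (θ i ^ 2 * θ j) + c * (θ i * θ j ^ 2) - θ j ^ 3 = 0 by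
      rw [h, zero_smul]
    rcases hcases with h | h | h
    · subst h; ring
    · subst h
      rw [hθsucc i, hc2]
      linear_combination (-(θ i) ^ 3 * (1 - q⁻¹ ^ 2) * (1 + q * q⁻¹)) * hqu
    · subst h
      rw [hθsucc j, hc2]
      linear_combination ((θ j) ^ 3 * (1 - q⁻¹ ^ 2) * (q * q⁻¹ + 1)) * hqu
end

section
/- Let U_q(sl_2) be the ℂ-algebra with generators K^{±1}, e^+, e^- and relations K K^{-1} = K^{-1} K = 1, K e^± K^{-1} = q^{±2} e^±, [e^+, e^-] = (K - K^{-1})/(q - q^{-1}). Define x = K, x^{-1} = K^{-1}, y = K^{-1} + e^-, z = K^{-1} - K^{-1} e^+ q (q - q^{-1})^2. Then these elements satisfy x x^{-1} = x^{-1} x = 1, (q x y - q^{-1} y x)/(q - q^{-1}) = 1, (q y z - q^{-1} z y)/(q - q^{-1}) = 1, and (q z x - q^{-1} x z)/(q - q^{-1}) = 1. -/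
set_option maxHeartbeats 2000000

/-- In U_q(sl₂) (Chevalley presentation), the elements x = K, x⁻¹ = K⁻¹, y = K⁻¹ + e⁻,
z = K⁻¹ - K⁻¹e⁺q(q-q⁻¹)² satisfy the equitable relations. -/
theorem stmt_6 (A : Type) [Ring A] [Algebra ℂ A]
    (q : ℂ) (hq : q ≠ 0) (hq2 : q ^ 2 ≠ 1)
    (K Kinv ep em : A)
    (h1 : K * Kinv = 1) (h1' : Kinv * K = 1)
    (h2p : K * ep * Kinv = (q ^ 2) • ep)
    (h2m : K * em * Kinv = (q⁻¹ ^ 2) • em)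
    (h3 : ep * em - em * ep = (q - q⁻¹)⁻¹ • (K - Kinv)) :
    let x := K
    let xinv := Kinv
    let y := Kinv + em
    let z := Kinv - (q * (q - q⁻¹) ^ 2) • (Kinv * ep)
    x * xinv = 1 ∧ xinv * x = 1 ∧
    (q - q⁻¹)⁻¹ • (q • (x * y) - q⁻¹ • (y * x)) = 1 ∧
    (q - q⁻¹)⁻¹ • (q • (y * z) - q⁻¹ • (z * y)) = 1 ∧
    (q - q⁻¹)⁻¹ • (q • (z * x) - q⁻¹ • (x * z)) = 1 := by
  have hq2' : (q:ℂ)^2 ≠ 0 := pow_ne_zero _ hq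
  have hq21 : q * q - 1 ≠ 0 := by rw [← sq]; exact sub_ne_zero.mpr hq2
  have hs : q - q⁻¹ ≠ 0 :=
    sub_ne_zero.mpr (fun h => hq2 (by rw [sq]; nth_rewrite 2 [h]; exact mul_inv_cancel₀ hq))
  -- commutation lemmas
  have lKK : ∀ t : A, K * (Kinv * t) = t := fun t => by rw [← mul_assoc, h1, one_mul]
  have lKK' : ∀ t : A, Kinv * (K * t) = t := fun t => by rw [← mul_assoc, h1', one_mul]
  have cKep : K * ep = (q^2) • (ep * K) := by
    have : K * ep * Kinv * K = (q^2) • ep * K := by rw [h2p]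
    rwa [mul_assoc, h1', mul_one, smul_mul_assoc] at this
  have cKinvEp : Kinv * ep = (q⁻¹^2) • (ep * Kinv) := by
    have : Kinv * (K * ep * Kinv) = Kinv * ((q^2) • ep) := by rw [h2p]
    rw [← mul_assoc, ← mul_assoc, h1', one_mul, mul_smul_comm] at this
    rw [this, smul_smul]
    rw [inv_pow, inv_mul_cancel₀ hq2', one_smul]
  have cKem : K * em = (q⁻¹^2) • (em * K) := by
    have : K * em * Kinv * K = (q⁻¹^2) • em * K := by rw [h2m]
    rwa [mul_assoc, h1', mul_one, smul_mul_assoc] at this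
  have cKinvEm : Kinv * em = (q^2) • (em * Kinv) := by
    have : Kinv * (K * em * Kinv) = Kinv * ((q⁻¹^2) • em) := by rw [h2m]
    rw [← mul_assoc, ← mul_assoc, h1', one_mul, mul_smul_comm] at this
    rw [this, smul_smul, inv_pow, mul_inv_cancel₀ hq2', one_smul]
  -- general (right-assoc) forms
  have cKep' : ∀ t : A, K * (ep * t) = (q^2) • (ep * (K * t)) := fun t => by
    rw [← mul_assoc, cKep, smul_mul_assoc, mul_assoc]
  have cKinvEp' : ∀ t : A, Kinv * (ep * t) = (q⁻¹^2) • (ep * (Kinv * t)) := fun t => by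
    rw [← mul_assoc, cKinvEp, smul_mul_assoc, mul_assoc]
  have cKem' : ∀ t : A, K * (em * t) = (q⁻¹^2) • (em * (K * t)) := fun t => by
    rw [← mul_assoc, cKem, smul_mul_assoc, mul_assoc]
  have cKinvEm' : ∀ t : A, Kinv * (em * t) = (q^2) • (em * (Kinv * t)) := fun t => by
    rw [← mul_assoc, cKinvEm, smul_mul_assoc, mul_assoc]
  have cEpEm : ep * em = em * ep + (q - q⁻¹)⁻¹ • K - (q - q⁻¹)⁻¹ • Kinv := by
    have := h3
    rw [sub_eq_iff_eq_add] at this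
    rw [this, smul_sub]; abel
  have cEpEm' : ∀ t : A, ep * (em * t)
      = em * (ep * t) + (q - q⁻¹)⁻¹ • (K * t) - (q - q⁻¹)⁻¹ • (Kinv * t) := fun t => by
    rw [← mul_assoc, cEpEm, sub_mul, add_mul, smul_mul_assoc, smul_mul_assoc, mul_assoc]
  intro x xinv y z
  refine ⟨h1, h1', ?_, ?_, ?_⟩
  · show (q - q⁻¹)⁻¹ • (q • (K * (Kinv + em)) - q⁻¹ • ((Kinv + em) * K)) = 1
    simp only [mul_add, add_mul, mul_sub, sub_mul, smul_add, smul_sub, smul_smul,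
      smul_mul_assoc, mul_smul_comm, h1, h1', cKem, cKep, cKinvEp, cKinvEm]
    match_scalars <;> field_simp <;> ring
  · show (q - q⁻¹)⁻¹ • (q • ((Kinv + em) * (Kinv - (q * (q - q⁻¹) ^ 2) • (Kinv * ep)))
      - q⁻¹ • ((Kinv - (q * (q - q⁻¹) ^ 2) • (Kinv * ep)) * (Kinv + em))) = 1
    simp only [mul_add, add_mul, mul_sub, sub_mul, smul_add, smul_sub, smul_smul,
      smul_mul_assoc, mul_smul_comm, mul_assoc, lKK, lKK', h1, h1', mul_one, one_mul,
      cKinvEp', cKinvEm', cKep', cKem', cEpEm', cKinvEp, cKinvEm, cKep, cKem, cEpEm]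
    match_scalars <;> field_simp <;> ring
  · show (q - q⁻¹)⁻¹ • (q • ((Kinv - (q * (q - q⁻¹) ^ 2) • (Kinv * ep)) * K)
      - q⁻¹ • (K * (Kinv - (q * (q - q⁻¹) ^ 2) • (Kinv * ep)))) = 1
    simp only [mul_add, add_mul, mul_sub, sub_mul, smul_add, smul_sub, smul_smul,
      smul_mul_assoc, mul_smul_comm, mul_assoc, lKK, lKK', h1, h1', mul_one, one_mul,
      cKinvEp', cKinvEm', cKep', cKem', cEpEm', cKinvEp, cKinvEm, cKep, cKem, cEpEm]
    match_scalars <;> field_simp <;> ring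
end

section
/- Let U be the unital associative ℂ-algebra with generators x^{±1}, y, z and relations x x^{-1} = x^{-1} x = 1, (q x y - q^{-1} y x)/(q - q^{-1}) = 1, (q y z - q^{-1} z y)/(q - q^{-1}) = 1, (q z x - q^{-1} x z)/(q - q^{-1}) = 1. Then the elements K^{±1} := x^{±1}, e^- := y - x^{-1}, e^+ := (1 - x z) q^{-1} (q - q^{-1})^{-2} satisfy the defining relations of U_q(sl_2): K K^{-1} = K^{-1} K = 1, K e^± K^{-1} = q^{±2} e^±, and [e^+, e^-] = (K - K^{-1})/(q - q^{-1}). -/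
/-- In the equitable presentation algebra, the elements K = x, K⁻¹ = x⁻¹, e⁻ = y - x⁻¹,
e⁺ = (1 - xz)q⁻¹(q-q⁻¹)⁻² satisfy the Chevalley relations of U_q(sl₂). -/
theorem stmt_7 (A : Type) [Ring A] [Algebra ℂ A]
    (q : ℂ) (hq : q ≠ 0) (hq2 : q ^ 2 ≠ 1)
    (x xinv y z : A)
    (h1 : x * xinv = 1) (h1' : xinv * x = 1)
    (hxy : (q - q⁻¹)⁻¹ • (q • (x * y) - q⁻¹ • (y * x)) = 1)
    (hyz : (q - q⁻¹)⁻¹ • (q • (y * z) - q⁻¹ • (z * y)) = 1)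
    (hzx : (q - q⁻¹)⁻¹ • (q • (z * x) - q⁻¹ • (x * z)) = 1) :
    let K := x
    let Kinv := xinv
    let em := y - xinv
    let ep := (q⁻¹ * ((q - q⁻¹) ^ 2)⁻¹) • (1 - x * z)
    K * Kinv = 1 ∧ Kinv * K = 1 ∧
    K * ep * Kinv = (q ^ 2) • ep ∧
    K * em * Kinv = (q⁻¹ ^ 2) • em ∧
    ep * em - em * ep = (q - q⁻¹)⁻¹ • (K - Kinv) := by
  have hqq : q * q⁻¹ = 1 := mul_inv_cancel₀ hq
  have hL : q - q⁻¹ ≠ 0 := by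
    intro h
    apply hq2
    have h' : q = q⁻¹ := sub_eq_zero.mp h
    calc q ^ 2 = q * q := sq q
    _ = q * q⁻¹ := by rw [← h']
    _ = 1 := hqq
  have hLL : (q - q⁻¹) * (q - q⁻¹)⁻¹ = 1 := mul_inv_cancel₀ hL
  -- scaled relations
  have Hxy : q • (x*y) - q⁻¹ • (y*x) = (q - q⁻¹) • (1:A) := by
    have := congrArg (fun a => (q - q⁻¹) • a) hxy
    simpa [smul_smul, hLL] using this
  have Hyz : q • (y*z) - q⁻¹ • (z*y) = (q - q⁻¹) • (1:A) := by
    have := congrArg (fun a => (q - q⁻¹) • a) hyz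
    simpa [smul_smul, hLL] using this
  have Hzx : q • (z*x) - q⁻¹ • (x*z) = (q - q⁻¹) • (1:A) := by
    have := congrArg (fun a => (q - q⁻¹) • a) hzx
    simpa [smul_smul, hLL] using this
  -- solved forms
  have hyx : y * x = (q*q) • (x*y) - (q*(q-q⁻¹)) • (1:A) := by
    have h' : q⁻¹ • (y*x) = q • (x*y) - (q-q⁻¹) • (1:A) := by
      rw [← Hxy]; abel
    have := congrArg (fun a => q • a) h'
    simpa [smul_smul, smul_sub, hqq] using this
  have hzy : z * y = (q*q) • (y*z) - (q*(q-q⁻¹)) • (1:A) := by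
    have h' : q⁻¹ • (z*y) = q • (y*z) - (q-q⁻¹) • (1:A) := by
      rw [← Hyz]; abel
    have := congrArg (fun a => q • a) h'
    simpa [smul_smul, smul_sub, hqq] using this
  have hxz : x * z = (q*q) • (z*x) - (q*(q-q⁻¹)) • (1:A) := by
    have h' : q⁻¹ • (x*z) = q • (z*x) - (q-q⁻¹) • (1:A) := by
      rw [← Hzx]; abel
    have := congrArg (fun a => q • a) h'
    simpa [smul_smul, smul_sub, hqq] using this
  intro K Kinv em ep
  refine ⟨h1, h1', ?_, ?_, ?_⟩
  · -- K ep Kinv = q^2 • ep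
    show x * ((q⁻¹ * ((q - q⁻¹) ^ 2)⁻¹) • (1 - x * z)) * xinv
        = (q ^ 2) • ((q⁻¹ * ((q - q⁻¹) ^ 2)⁻¹) • (1 - x * z))
    have e1 : x * x * z * xinv = (q*q) • (x*z) - (q*(q-q⁻¹)) • (1:A) := by
      calc x * x * z * xinv = x * (x * z) * xinv := by rw [mul_assoc x x z]
      _ = x * ((q*q) • (z*x) - (q*(q-q⁻¹)) • (1:A)) * xinv := by rw [hxz]
      _ = (q*q) • (x * (z * (x * xinv))) - (q*(q-q⁻¹)) • (x * xinv) := by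
          simp only [mul_sub, sub_mul, mul_smul_comm, smul_mul_assoc, mul_one, mul_assoc]
      _ = (q*q) • (x*z) - (q*(q-q⁻¹)) • (1:A) := by rw [h1]; simp [mul_assoc]
    have expand : x * ((q⁻¹ * ((q - q⁻¹) ^ 2)⁻¹) • (1 - x * z)) * xinv
        = (q⁻¹ * ((q - q⁻¹) ^ 2)⁻¹) • (x * xinv - x * x * z * xinv) := by
      simp [mul_sub, sub_mul, mul_smul_comm, smul_mul_assoc, mul_assoc]
    rw [expand, h1, e1]
    match_scalars <;> field_simp <;> ring
  · -- K em Kinv = q⁻² • em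
    show x * (y - xinv) * xinv = (q⁻¹ ^ 2) • (y - xinv)
    have e1 : x * y * xinv = (q⁻¹*q⁻¹) • y + (q⁻¹*(q-q⁻¹)) • xinv := by
      have h2 : q • (x*y*xinv) - q⁻¹ • (y*x*xinv) = (q - q⁻¹) • xinv := by
        have := congrArg (fun a => a * xinv) Hxy
        simpa [sub_mul, smul_mul_assoc] using this
      have h3 : y * x * xinv = y := by rw [mul_assoc, h1, mul_one]
      rw [h3] at h2
      have h4 : q • (x*y*xinv) = q⁻¹ • y + (q - q⁻¹) • xinv := by
        rw [← h2]; abel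
      have := congrArg (fun a => q⁻¹ • a) h4
      simpa [smul_smul, smul_add, inv_mul_cancel₀ hq] using this
    have expand : x * (y - xinv) * xinv = x * y * xinv - xinv := by
      rw [mul_sub, h1, sub_mul, one_mul]
    rw [expand, e1]
    match_scalars <;> field_simp <;> ring
  · -- commutator
    show (q⁻¹ * ((q - q⁻¹) ^ 2)⁻¹) • (1 - x * z) * (y - xinv)
        - (y - xinv) * ((q⁻¹ * ((q - q⁻¹) ^ 2)⁻¹) • (1 - x * z))
        = (q - q⁻¹)⁻¹ • (x - xinv)
    have e1 : x * z * y = (q*q) • (x*(y*z)) - (q*(q-q⁻¹)) • x := by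
      calc x * z * y = x * (z*y) := by rw [mul_assoc]
      _ = x * ((q*q) • (y*z) - (q*(q-q⁻¹)) • (1:A)) := by rw [hzy]
      _ = _ := by simp [mul_sub, mul_smul_comm]
    have e2 : x * z * xinv = (q*q) • z - (q*(q-q⁻¹)) • xinv := by
      calc x * z * xinv = ((q*q) • (z*x) - (q*(q-q⁻¹)) • (1:A)) * xinv := by rw [hxz]
      _ = (q*q) • (z*(x*xinv)) - (q*(q-q⁻¹)) • xinv := by
          simp [sub_mul, smul_mul_assoc, mul_assoc]
      _ = _ := by rw [h1, mul_one]
    have e3 : y * (x * z) = (q*q) • (x*(y*z)) - (q*(q-q⁻¹)) • z := by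
      calc y * (x * z) = (y*x) * z := by rw [mul_assoc]
      _ = ((q*q) • (x*y) - (q*(q-q⁻¹)) • (1:A)) * z := by rw [hyx]
      _ = _ := by simp [sub_mul, smul_mul_assoc, mul_assoc]
    have e4 : xinv * (x * z) = z := by rw [← mul_assoc, h1', one_mul]
    have key : (1 - x*z) * (y - xinv) - (y - xinv) * (1 - x*z)
        = (q*(q-q⁻¹)) • (x - xinv) := by
      have expand : (1 - x*z) * (y - xinv) - (y - xinv) * (1 - x*z)
          = - (x*z*y) + x*z*xinv + y*(x*z) - xinv*(x*z) := by
        simp only [sub_mul, mul_sub, one_mul, mul_one]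
        abel
      rw [expand, e1, e2, e3, e4]
      match_scalars <;> field_simp <;> ring
    calc (q⁻¹ * ((q - q⁻¹) ^ 2)⁻¹) • (1 - x * z) * (y - xinv)
        - (y - xinv) * ((q⁻¹ * ((q - q⁻¹) ^ 2)⁻¹) • (1 - x * z))
        = (q⁻¹ * ((q - q⁻¹) ^ 2)⁻¹) • ((1 - x*z) * (y - xinv) - (y - xinv) * (1 - x*z)) := by
          rw [smul_mul_assoc, mul_smul_comm, smul_sub]
    _ = (q⁻¹ * ((q - q⁻¹) ^ 2)⁻¹) • ((q*(q-q⁻¹)) • (x - xinv)) := by rw [key]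
    _ = (q - q⁻¹)⁻¹ • (x - xinv) := by
          rw [smul_smul]
          congr 1
          rw [sq, mul_inv]
          calc q⁻¹ * ((q - q⁻¹)⁻¹ * (q - q⁻¹)⁻¹) * (q * (q - q⁻¹))
              = (q⁻¹ * q) * ((q - q⁻¹)⁻¹ * ((q - q⁻¹)⁻¹ * (q - q⁻¹))) := by ring
          _ = (q - q⁻¹)⁻¹ := by
              rw [inv_mul_cancel₀ hq, inv_mul_cancel₀ hL, one_mul, mul_one]
end

section
/- The algebra U_q(sl_2) in its Chevalley presentation (generators K^{±1}, e^±) is isomorphic as a ℂ-algebra to the algebra with generators x^{±1}, y, z and relations x x^{-1} = x^{-1} x = 1 and (q x y - q^{-1} y x)/(q-q^{-1}) = (q y z - q^{-1} z y)/(q-q^{-1}) = (q z x - q^{-1} x z)/(q-q^{-1}) = 1, via x^{±1} ↦ K^{±1}, y ↦ K^{-1} + e^-, z ↦ K^{-1} - K^{-1} e^+ q (q-q^{-1})^2, with inverse K^{±1} ↦ x^{±1}, e^- ↦ y - x^{-1}, e^+ ↦ (1 - x z) q^{-1}(q-q^{-1})^{-2}. -/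
noncomputable section

/-- The q-bracket [3]_q (unused here) and Chevalley generators of U_q(sl₂). -/
inductive UqCGen : Type | K | Kinv | ep | em

open UqCGen in
/-- Chevalley relations of U_q(sl₂). -/
inductive UqCRel (q : ℂ) : FreeAlgebra ℂ UqCGen → FreeAlgebra ℂ UqCGen → Prop
  | KKinv : UqCRel q (FreeAlgebra.ι ℂ K * FreeAlgebra.ι ℂ Kinv) 1
  | KinvK : UqCRel q (FreeAlgebra.ι ℂ Kinv * FreeAlgebra.ι ℂ K) 1
  | Kep : UqCRel q (FreeAlgebra.ι ℂ K * FreeAlgebra.ι ℂ ep * FreeAlgebra.ι ℂ Kinv)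
      ((q ^ 2) • FreeAlgebra.ι ℂ ep)
  | Kem : UqCRel q (FreeAlgebra.ι ℂ K * FreeAlgebra.ι ℂ em * FreeAlgebra.ι ℂ Kinv)
      ((q⁻¹ ^ 2) • FreeAlgebra.ι ℂ em)
  | epem : UqCRel q
      (FreeAlgebra.ι ℂ ep * FreeAlgebra.ι ℂ em - FreeAlgebra.ι ℂ em * FreeAlgebra.ι ℂ ep)
      ((q - q⁻¹)⁻¹ • (FreeAlgebra.ι ℂ K - FreeAlgebra.ι ℂ Kinv))

/-- U_q(sl₂) in the Chevalley presentation. -/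
abbrev UqCAlg (q : ℂ) := RingQuot (UqCRel q)

def cK (q : ℂ) : UqCAlg q := RingQuot.mkAlgHom ℂ (UqCRel q) (FreeAlgebra.ι ℂ UqCGen.K)
def cKinv (q : ℂ) : UqCAlg q := RingQuot.mkAlgHom ℂ (UqCRel q) (FreeAlgebra.ι ℂ UqCGen.Kinv)
def cEp (q : ℂ) : UqCAlg q := RingQuot.mkAlgHom ℂ (UqCRel q) (FreeAlgebra.ι ℂ UqCGen.ep)
def cEm (q : ℂ) : UqCAlg q := RingQuot.mkAlgHom ℂ (UqCRel q) (FreeAlgebra.ι ℂ UqCGen.em)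

/-- Generators of the equitable presentation of U_q(sl₂). -/
inductive UqEGen : Type | x | xinv | y | z

open UqEGen in
/-- Relations of the equitable presentation of U_q(sl₂). -/
inductive UqERel (q : ℂ) : FreeAlgebra ℂ UqEGen → FreeAlgebra ℂ UqEGen → Prop
  | xxinv : UqERel q (FreeAlgebra.ι ℂ x * FreeAlgebra.ι ℂ xinv) 1
  | xinvx : UqERel q (FreeAlgebra.ι ℂ xinv * FreeAlgebra.ι ℂ x) 1
  | xy : UqERel q ((q - q⁻¹)⁻¹ •
      (q • (FreeAlgebra.ι ℂ x * FreeAlgebra.ι ℂ y)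
        - q⁻¹ • (FreeAlgebra.ι ℂ y * FreeAlgebra.ι ℂ x))) 1
  | yz : UqERel q ((q - q⁻¹)⁻¹ •
      (q • (FreeAlgebra.ι ℂ y * FreeAlgebra.ι ℂ z)
        - q⁻¹ • (FreeAlgebra.ι ℂ z * FreeAlgebra.ι ℂ y))) 1
  | zx : UqERel q ((q - q⁻¹)⁻¹ •
      (q • (FreeAlgebra.ι ℂ z * FreeAlgebra.ι ℂ x)
        - q⁻¹ • (FreeAlgebra.ι ℂ x * FreeAlgebra.ι ℂ z))) 1

/-- The equitable presentation of U_q(sl₂). -/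
abbrev UqEAlg (q : ℂ) := RingQuot (UqERel q)

def uqX (q : ℂ) : UqEAlg q := RingQuot.mkAlgHom ℂ (UqERel q) (FreeAlgebra.ι ℂ UqEGen.x)
def uqXinv (q : ℂ) : UqEAlg q := RingQuot.mkAlgHom ℂ (UqERel q) (FreeAlgebra.ι ℂ UqEGen.xinv)
def uqY (q : ℂ) : UqEAlg q := RingQuot.mkAlgHom ℂ (UqERel q) (FreeAlgebra.ι ℂ UqEGen.y)
def uqZ (q : ℂ) : UqEAlg q := RingQuot.mkAlgHom ℂ (UqERel q) (FreeAlgebra.ι ℂ UqEGen.z)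

namespace Stmt8Aux

variable (q : ℂ)

lemma cKKi : cK q * cKinv q = 1 := by
  have h := RingQuot.mkAlgHom_rel ℂ (UqCRel.KKinv (q := q))
  simpa [cK, cKinv, map_mul] using h

lemma cKiK : cKinv q * cK q = 1 := by
  have h := RingQuot.mkAlgHom_rel ℂ (UqCRel.KinvK (q := q))
  simpa [cK, cKinv, map_mul] using h

lemma cKepKi : cK q * cEp q * cKinv q = (q ^ 2) • cEp q := by
  have h := RingQuot.mkAlgHom_rel ℂ (UqCRel.Kep (q := q))
  simpa [cK, cKinv, cEp, map_mul, map_smul] using h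

lemma cKemKi : cK q * cEm q * cKinv q = (q⁻¹ ^ 2) • cEm q := by
  have h := RingQuot.mkAlgHom_rel ℂ (UqCRel.Kem (q := q))
  simpa [cK, cKinv, cEm, map_mul, map_smul] using h

lemma cepem : cEp q * cEm q - cEm q * cEp q = (q - q⁻¹)⁻¹ • (cK q - cKinv q) := by
  have h := RingQuot.mkAlgHom_rel ℂ (UqCRel.epem (q := q))
  simpa [cK, cKinv, cEp, cEm, map_mul, map_sub, map_smul] using h

-- derived commutation rules
lemma cepKi : cEp q * cKinv q = (q ^ 2) • (cKinv q * cEp q) := by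
  calc cEp q * cKinv q = cKinv q * (cK q * cEp q * cKinv q) := by
        rw [mul_assoc (cK q), ← mul_assoc (cKinv q), cKiK, one_mul]
    _ = (q ^ 2) • (cKinv q * cEp q) := by rw [cKepKi, mul_smul_comm]

lemma cemKi : cEm q * cKinv q = (q⁻¹ ^ 2) • (cKinv q * cEm q) := by
  calc cEm q * cKinv q = cKinv q * (cK q * cEm q * cKinv q) := by
        rw [mul_assoc (cK q), ← mul_assoc (cKinv q), cKiK, one_mul]
    _ = (q⁻¹ ^ 2) • (cKinv q * cEm q) := by rw [cKemKi, mul_smul_comm]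

lemma cKep : cK q * cEp q = (q ^ 2) • (cEp q * cK q) := by
  calc cK q * cEp q = cK q * cEp q * cKinv q * cK q := by
        rw [mul_assoc (cK q * cEp q), cKiK, mul_one]
    _ = (q ^ 2) • (cEp q * cK q) := by rw [cKepKi, smul_mul_assoc]

lemma cKem : cK q * cEm q = (q⁻¹ ^ 2) • (cEm q * cK q) := by
  calc cK q * cEm q = cK q * cEm q * cKinv q * cK q := by
        rw [mul_assoc (cK q * cEm q), cKiK, mul_one]
    _ = (q⁻¹ ^ 2) • (cEm q * cK q) := by rw [cKemKi, smul_mul_assoc]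


section
variable {A : Type*} [Ring A] [Algebra ℂ A]

/-- From the equitable-type relation, express `b*a` in terms of `a*b`. -/
lemma swap_right (hq : q ≠ 0) {a b : A} (h : q • (a * b) - q⁻¹ • (b * a) = (q - q⁻¹) • 1) :
    b * a = (q ^ 2) • (a * b) - (q ^ 2 - 1) • 1 := by
  have h3 : q⁻¹ • (b * a) = q • (a * b) - (q - q⁻¹) • 1 := by rw [← h]; abel
  calc b * a = q • (q⁻¹ • (b * a)) := by
        rw [smul_smul, mul_inv_cancel₀ hq, one_smul]
    _ = q • (q • (a * b) - (q - q⁻¹) • 1) := by rw [h3]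
    _ = (q ^ 2) • (a * b) - (q ^ 2 - 1) • 1 := by
        match_scalars <;> field_simp <;> ring

/-- From the equitable-type relation, express `a*b` in terms of `b*a`. -/
lemma swap_left (hq : q ≠ 0) {a b : A} (h : q • (a * b) - q⁻¹ • (b * a) = (q - q⁻¹) • 1) :
    a * b = (q⁻¹ ^ 2) • (b * a) + (1 - q⁻¹ ^ 2) • 1 := by
  have h3 : q • (a * b) = q⁻¹ • (b * a) + (q - q⁻¹) • 1 := by rw [← h]; abel
  calc a * b = q⁻¹ • (q • (a * b)) := by
        rw [smul_smul, inv_mul_cancel₀ hq, one_smul]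
    _ = q⁻¹ • (q⁻¹ • (b * a) + (q - q⁻¹) • 1) := by rw [h3]
    _ = (q⁻¹ ^ 2) • (b * a) + (1 - q⁻¹ ^ 2) • 1 := by
        match_scalars <;> field_simp <;> ring

end


lemma exxi : uqX q * uqXinv q = 1 := by
  have h := RingQuot.mkAlgHom_rel ℂ (UqERel.xxinv (q := q))
  simpa [uqX, uqXinv, map_mul] using h

lemma exix : uqXinv q * uqX q = 1 := by
  have h := RingQuot.mkAlgHom_rel ℂ (UqERel.xinvx (q := q))
  simpa [uqX, uqXinv, map_mul] using h

lemma exy (hqq : q - q⁻¹ ≠ 0) : q • (uqX q * uqY q) - q⁻¹ • (uqY q * uqX q) = (q - q⁻¹) • 1 := by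
  have h := RingQuot.mkAlgHom_rel ℂ (UqERel.xy (q := q))
  simp only [map_smul, map_sub, map_mul, map_one] at h
  rw [inv_smul_eq_iff₀ hqq] at h
  simpa [uqX, uqY] using h

lemma eyz (hqq : q - q⁻¹ ≠ 0) : q • (uqY q * uqZ q) - q⁻¹ • (uqZ q * uqY q) = (q - q⁻¹) • 1 := by
  have h := RingQuot.mkAlgHom_rel ℂ (UqERel.yz (q := q))
  simp only [map_smul, map_sub, map_mul, map_one] at h
  rw [inv_smul_eq_iff₀ hqq] at h
  simpa [uqY, uqZ] using h

lemma ezx (hqq : q - q⁻¹ ≠ 0) : q • (uqZ q * uqX q) - q⁻¹ • (uqX q * uqZ q) = (q - q⁻¹) • 1 := by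
  have h := RingQuot.mkAlgHom_rel ℂ (UqERel.zx (q := q))
  simp only [map_smul, map_sub, map_mul, map_one] at h
  rw [inv_smul_eq_iff₀ hqq] at h
  simpa [uqZ, uqX] using h


-- more derived lemmas (Chevalley side)
lemma cepem2 : cEp q * cEm q = cEm q * cEp q + (q - q⁻¹)⁻¹ • (cK q - cKinv q) :=
  (sub_eq_iff_eq_add.mp (cepem q)).trans (add_comm _ _)

lemma cKiepK (hq : q ≠ 0) : cKinv q * (cEp q * cK q) = (q ^ 2)⁻¹ • cEp q := by
  have h : (q ^ 2) • (cKinv q * (cEp q * cK q)) = cEp q := by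
    rw [← mul_smul_comm, ← cKep, ← mul_assoc, cKiK, one_mul]
  calc cKinv q * (cEp q * cK q)
      = (q ^ 2)⁻¹ • ((q ^ 2) • (cKinv q * (cEp q * cK q))) := by
        rw [smul_smul, inv_mul_cancel₀ (pow_ne_zero 2 hq), one_smul]
    _ = (q ^ 2)⁻¹ • cEp q := by rw [h]

lemma cKKiep : cK q * (cKinv q * cEp q) = cEp q := by
  rw [← mul_assoc, cKKi, one_mul]

lemma cemKiep : cEm q * (cKinv q * cEp q) = (q⁻¹ ^ 2) • (cKinv q * (cEm q * cEp q)) := by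
  rw [← mul_assoc, cemKi, smul_mul_assoc, mul_assoc]

lemma cKiepKi : cKinv q * (cEp q * cKinv q) = (q ^ 2) • (cKinv q * (cKinv q * cEp q)) := by
  rw [cepKi, mul_smul_comm]

lemma cKiepem (hqq : q - q⁻¹ ≠ 0) : cKinv q * (cEp q * cEm q)
    = cKinv q * (cEm q * cEp q) + (q - q⁻¹)⁻¹ • (1 - cKinv q * cKinv q) := by
  rw [cepem2, mul_add, mul_smul_comm, mul_sub, ← mul_assoc, cKiK]

-- target generator images
open UqEGen UqCGen in
def fGen : UqEGen → UqCAlg q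
  | .x => cK q
  | .xinv => cKinv q
  | .y => cKinv q + cEm q
  | .z => cKinv q - (q * (q - q⁻¹) ^ 2) • (cKinv q * cEp q)

open UqEGen UqCGen in
def gGen : UqCGen → UqEAlg q
  | .K => uqX q
  | .Kinv => uqXinv q
  | .em => uqY q - uqXinv q
  | .ep => (q⁻¹ * ((q - q⁻¹) ^ 2)⁻¹) • (1 - uqX q * uqZ q)

lemma fRel (hq : q ≠ 0) (hqq : q - q⁻¹ ≠ 0) :
    ∀ ⦃a b⦄, UqERel q a b →
      (FreeAlgebra.lift ℂ (fGen q)) a = (FreeAlgebra.lift ℂ (fGen q)) b := by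
  intro a b h
  have e1 : q * (q - q⁻¹) = q ^ 2 - 1 := by field_simp
  have h2 : q ^ 2 - 1 ≠ 0 := e1 ▸ mul_ne_zero hq hqq
  have h4 : -q ^ 2 + q ^ 4 ≠ 0 := by
    have h5 := mul_ne_zero (pow_ne_zero 2 hq) h2
    intro h; apply h5; linear_combination h
  have h2' : q * q - 1 ≠ 0 := by intro h; apply h2; linear_combination h
  have h4' : q ^ 4 - q ^ 2 ≠ 0 := by intro h; apply h4; linear_combination h
  induction h with
  | xxinv =>
      simp only [map_mul, map_one, FreeAlgebra.lift_ι_apply, fGen]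
      exact cKKi q
  | xinvx =>
      simp only [map_mul, map_one, FreeAlgebra.lift_ι_apply, fGen]
      exact cKiK q
  | xy =>
      simp only [map_smul, map_sub, map_mul, map_one, FreeAlgebra.lift_ι_apply, fGen]
      rw [inv_smul_eq_iff₀ hqq]
      simp only [mul_add, add_mul, cKKi, cKiK, cKem]
      match_scalars
      all_goals try field_simp
      all_goals ring
  | yz =>
      simp only [map_smul, map_sub, map_mul, map_one, FreeAlgebra.lift_ι_apply, fGen]
      rw [inv_smul_eq_iff₀ hqq]
      simp only [mul_add, add_mul, mul_sub, sub_mul, smul_mul_assoc, mul_smul_comm,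
        smul_sub, smul_add, smul_smul, mul_assoc]
      simp only [cemKi, cemKiep, cKiepKi, cKiepem q hqq, cKiK, cKKi]
      match_scalars
      all_goals try field_simp
      all_goals ring
  | zx =>
      simp only [map_smul, map_sub, map_mul, map_one, FreeAlgebra.lift_ι_apply, fGen]
      rw [inv_smul_eq_iff₀ hqq]
      simp only [mul_add, add_mul, mul_sub, sub_mul, smul_mul_assoc, mul_smul_comm,
        smul_sub, smul_add, smul_smul, mul_assoc]
      simp only [cKiepK q hq, cKKiep, cKiK, cKKi]
      match_scalars
      all_goals try field_simp
      all_goals ring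


lemma gRel (hq : q ≠ 0) (hqq : q - q⁻¹ ≠ 0) :
    ∀ ⦃a b⦄, UqCRel q a b →
      (FreeAlgebra.lift ℂ (gGen q)) a = (FreeAlgebra.lift ℂ (gGen q)) b := by
  intro a b h
  have e1 : q * (q - q⁻¹) = q ^ 2 - 1 := by field_simp
  have h2 : q ^ 2 - 1 ≠ 0 := e1 ▸ mul_ne_zero hq hqq
  have h4 : -q ^ 2 + q ^ 4 ≠ 0 := by
    have h5 := mul_ne_zero (pow_ne_zero 2 hq) h2
    intro h; apply h5; linear_combination h
  have h2' : q * q - 1 ≠ 0 := by intro h; apply h2; linear_combination h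
  have h4' : q ^ 4 - q ^ 2 ≠ 0 := by intro h; apply h4; linear_combination h
  have exy2 := swap_left q hq (exy q hqq)
  have eyx2 := swap_right q hq (exy q hqq)
  have ezy2 := swap_right q hq (eyz q hqq)
  have exz2 := swap_right q hq (ezx q hqq)
  have hyxi : uqX q * (uqY q * uqXinv q)
      = (q⁻¹ ^ 2) • uqY q + (1 - q⁻¹ ^ 2) • uqXinv q := by
    rw [← mul_assoc, exy2, add_mul, smul_mul_assoc, smul_mul_assoc, one_mul,
      mul_assoc, exxi, mul_one]
  have hxixi : uqX q * (uqXinv q * uqXinv q) = uqXinv q := by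
    rw [← mul_assoc, exxi, one_mul]
  have hzxi : uqX q * (uqZ q * uqXinv q)
      = (q ^ 2) • uqZ q - (q ^ 2 - 1) • uqXinv q := by
    rw [← mul_assoc, exz2, sub_mul, smul_mul_assoc, smul_mul_assoc, one_mul,
      mul_assoc, exxi, mul_one]
  have hzy : uqX q * (uqZ q * uqY q)
      = (q ^ 2) • (uqX q * (uqY q * uqZ q)) - (q ^ 2 - 1) • uqX q := by
    rw [ezy2, mul_sub, mul_smul_comm, mul_smul_comm, mul_one]
  have hyx : uqY q * (uqX q * uqZ q)
      = (q ^ 2) • (uqX q * (uqY q * uqZ q)) - (q ^ 2 - 1) • uqZ q := by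
    rw [← mul_assoc, eyx2, sub_mul, smul_mul_assoc, smul_mul_assoc, one_mul,
      mul_assoc]
  have hxix : uqXinv q * (uqX q * uqZ q) = uqZ q := by
    rw [← mul_assoc, exix, one_mul]
  induction h with
  | KKinv =>
      simp only [map_mul, map_one, FreeAlgebra.lift_ι_apply, gGen]
      exact exxi q
  | KinvK =>
      simp only [map_mul, map_one, FreeAlgebra.lift_ι_apply, gGen]
      exact exix q
  | Kep =>
      simp only [map_smul, map_sub, map_mul, map_one, FreeAlgebra.lift_ι_apply, gGen]
      simp only [mul_smul_comm, smul_mul_assoc, mul_sub, sub_mul, mul_one, one_mul,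
        mul_assoc, exxi]
      rw [hzxi]
      simp only [mul_sub, mul_smul_comm, exxi]
      match_scalars
      all_goals try field_simp
      all_goals ring
  | Kem =>
      simp only [map_smul, map_sub, map_mul, map_one, FreeAlgebra.lift_ι_apply, gGen]
      simp only [mul_smul_comm, smul_mul_assoc, mul_sub, sub_mul, mul_one, one_mul,
        mul_assoc, exxi]
      rw [hyxi]
      match_scalars
      all_goals try field_simp
      all_goals ring
  | epem =>
      simp only [map_smul, map_sub, map_mul, map_one, FreeAlgebra.lift_ι_apply, gGen]
      simp only [mul_smul_comm, smul_mul_assoc, mul_sub, sub_mul, mul_one, one_mul,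
        smul_sub, smul_smul, mul_assoc]
      rw [hzy, hyx, hxix, hzxi]
      match_scalars
      all_goals try field_simp
      all_goals ring


def fHom (hq : q ≠ 0) (hqq : q - q⁻¹ ≠ 0) : UqEAlg q →ₐ[ℂ] UqCAlg q :=
  RingQuot.liftAlgHom ℂ ⟨FreeAlgebra.lift ℂ (fGen q), fRel q hq hqq⟩

def gHom (hq : q ≠ 0) (hqq : q - q⁻¹ ≠ 0) : UqCAlg q →ₐ[ℂ] UqEAlg q :=
  RingQuot.liftAlgHom ℂ ⟨FreeAlgebra.lift ℂ (gGen q), gRel q hq hqq⟩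

variable (hq : q ≠ 0) (hqq : q - q⁻¹ ≠ 0)

lemma fHom_X : fHom q hq hqq (uqX q) = cK q := by
  simp [fHom, uqX, RingQuot.liftAlgHom_mkAlgHom_apply, fGen]
lemma fHom_Xinv : fHom q hq hqq (uqXinv q) = cKinv q := by
  simp [fHom, uqXinv, RingQuot.liftAlgHom_mkAlgHom_apply, fGen]
lemma fHom_Y : fHom q hq hqq (uqY q) = cKinv q + cEm q := by
  simp [fHom, uqY, RingQuot.liftAlgHom_mkAlgHom_apply, fGen]
lemma fHom_Z : fHom q hq hqq (uqZ q)
    = cKinv q - (q * (q - q⁻¹) ^ 2) • (cKinv q * cEp q) := by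
  simp [fHom, uqZ, RingQuot.liftAlgHom_mkAlgHom_apply, fGen]

lemma gHom_K : gHom q hq hqq (cK q) = uqX q := by
  simp [gHom, cK, RingQuot.liftAlgHom_mkAlgHom_apply, gGen]
lemma gHom_Kinv : gHom q hq hqq (cKinv q) = uqXinv q := by
  simp [gHom, cKinv, RingQuot.liftAlgHom_mkAlgHom_apply, gGen]
lemma gHom_Em : gHom q hq hqq (cEm q) = uqY q - uqXinv q := by
  simp [gHom, cEm, RingQuot.liftAlgHom_mkAlgHom_apply, gGen]
lemma gHom_Ep : gHom q hq hqq (cEp q)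
    = (q⁻¹ * ((q - q⁻¹) ^ 2)⁻¹) • (1 - uqX q * uqZ q) := by
  simp [gHom, cEp, RingQuot.liftAlgHom_mkAlgHom_apply, gGen]

lemma scal1 (hq : q ≠ 0) (hqq : q - q⁻¹ ≠ 0) : q * (q - q⁻¹) ^ 2 * (q⁻¹ * ((q - q⁻¹) ^ 2)⁻¹) = 1 := by
  have h2' : q * q - 1 ≠ 0 := by
    have e1 : q * (q - q⁻¹) = q * q - 1 := by field_simp
    exact e1 ▸ mul_ne_zero hq hqq
  have nz : q * (q * q - 1) ^ 2 ≠ 0 := mul_ne_zero hq (pow_ne_zero 2 h2')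
  field_simp
  exact div_self (by rw [sq]; exact h2')

lemma scal2 (hq : q ≠ 0) (hqq : q - q⁻¹ ≠ 0) : q⁻¹ * ((q - q⁻¹) ^ 2)⁻¹ * (q * (q - q⁻¹) ^ 2) = 1 := by
  rw [mul_comm]; exact scal1 q hq hqq

lemma exixMul (t : UqEAlg q) : uqXinv q * (uqX q * t) = t := by
  rw [← mul_assoc, exix, one_mul]

lemma fg : (fHom q hq hqq).comp (gHom q hq hqq) = AlgHom.id ℂ (UqCAlg q) := by
  apply RingQuot.ringQuot_ext'
  apply FreeAlgebra.hom_ext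
  funext g
  have key : ∀ t : FreeAlgebra ℂ UqCGen,
      ((fHom q hq hqq).comp (gHom q hq hqq)).comp (RingQuot.mkAlgHom ℂ (UqCRel q)) t
      = fHom q hq hqq (gHom q hq hqq (RingQuot.mkAlgHom ℂ (UqCRel q) t)) := fun t => rfl
  cases g with
  | K =>
      show fHom q hq hqq (gHom q hq hqq (cK q)) = _
      rw [gHom_K, fHom_X]; rfl
  | Kinv =>
      show fHom q hq hqq (gHom q hq hqq (cKinv q)) = _
      rw [gHom_Kinv, fHom_Xinv]; rfl
  | em =>
      show fHom q hq hqq (gHom q hq hqq (cEm q)) = _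
      rw [gHom_Em, map_sub, fHom_Y, fHom_Xinv]
      show _ = cEm q
      abel
  | ep =>
      show fHom q hq hqq (gHom q hq hqq (cEp q)) = _
      rw [gHom_Ep, map_smul, map_sub, map_one, map_mul, fHom_X, fHom_Z]
      show _ = cEp q
      rw [mul_sub, mul_smul_comm, cKKi, cKKiep, sub_sub_cancel, smul_smul,
        scal2 q hq hqq, one_smul]

lemma gf : (gHom q hq hqq).comp (fHom q hq hqq) = AlgHom.id ℂ (UqEAlg q) := by
  apply RingQuot.ringQuot_ext'
  apply FreeAlgebra.hom_ext
  funext g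
  cases g with
  | x =>
      show gHom q hq hqq (fHom q hq hqq (uqX q)) = _
      rw [fHom_X, gHom_K]; rfl
  | xinv =>
      show gHom q hq hqq (fHom q hq hqq (uqXinv q)) = _
      rw [fHom_Xinv, gHom_Kinv]; rfl
  | y =>
      show gHom q hq hqq (fHom q hq hqq (uqY q)) = _
      rw [fHom_Y, map_add, gHom_Kinv, gHom_Em]
      show _ = uqY q
      abel
  | z =>
      show gHom q hq hqq (fHom q hq hqq (uqZ q)) = _
      rw [fHom_Z, map_sub, map_smul, map_mul, gHom_Kinv, gHom_Ep]
      show _ = uqZ q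
      rw [mul_smul_comm, mul_sub, mul_one, exixMul, smul_smul, scal1 q hq hqq,
        one_smul, sub_sub_cancel]

end Stmt8Aux

open Stmt8Aux in
/-- The Chevalley and equitable presentations of U_q(sl₂) are isomorphic, via
x^{±1} ↦ K^{±1}, y ↦ K⁻¹ + e⁻, z ↦ K⁻¹ - K⁻¹e⁺q(q-q⁻¹)², with inverse
K^{±1} ↦ x^{±1}, e⁻ ↦ y - x⁻¹, e⁺ ↦ (1 - xz)q⁻¹(q-q⁻¹)⁻². -/
theorem stmt_8 (q : ℂ) (hq : q ≠ 0) (hq2 : q ^ 2 ≠ 1) :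
    ∃ e : UqEAlg q ≃ₐ[ℂ] UqCAlg q,
      e (uqX q) = cK q ∧
      e (uqXinv q) = cKinv q ∧
      e (uqY q) = cKinv q + cEm q ∧
      e (uqZ q) = cKinv q - (q * (q - q⁻¹) ^ 2) • (cKinv q * cEp q) ∧
      e.symm (cK q) = uqX q ∧
      e.symm (cKinv q) = uqXinv q ∧
      e.symm (cEm q) = uqY q - uqXinv q ∧
      e.symm (cEp q) = (q⁻¹ * ((q - q⁻¹) ^ 2)⁻¹) • (1 - uqX q * uqZ q) := by
  have hqq : q - q⁻¹ ≠ 0 := by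
    intro h
    have h' := sub_eq_zero.mp h
    apply hq2
    rw [sq]; nth_rewrite 2 [h']
    exact mul_inv_cancel₀ hq
  refine ⟨AlgEquiv.ofAlgHom (fHom q hq hqq) (gHom q hq hqq) (fg q hq hqq) (gf q hq hqq),
    fHom_X q hq hqq, fHom_Xinv q hq hqq, fHom_Y q hq hqq, fHom_Z q hq hqq,
    gHom_K q hq hqq, gHom_Kinv q hq hqq, gHom_Em q hq hqq, gHom_Ep q hq hqq⟩

end
end

section
/- For each i ∈ ℤ/4ℤ there exists a ℂ-algebra homomorphism from U_q(sl_2) (in the equitable presentation with generators x^{±1}, y, z) to the q-tetrahedron algebra ⊠_q sending x ↦ x_{i,i+2}, x^{-1} ↦ x_{i+2,i}, y ↦ x_{i+2,i+3}, z ↦ x_{i+3,i}. -/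
noncomputable section

/-- Generating set of the q-tetrahedron algebra: pairs (i,j) in ℤ/4 with j-i ∈ {1,2}. -/
abbrev TetGen : Type := {p : ZMod 4 × ZMod 4 // p.2 - p.1 = 1 ∨ p.2 - p.1 = 2}

def tg1 (i : ZMod 4) : TetGen := ⟨(i, i + 1), Or.inl (by ring)⟩
def tg2 (i : ZMod 4) : TetGen := ⟨(i, i + 2), Or.inr (by ring)⟩

/-- The q-bracket [3]_q. -/
def brq3 (q : ℂ) : ℂ := (q ^ 3 - q⁻¹ ^ 3) / (q - q⁻¹)

/-- Defining relations of the q-tetrahedron algebra. -/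
inductive TetRel (q : ℂ) : FreeAlgebra ℂ TetGen → FreeAlgebra ℂ TetGen → Prop
  | inv (i : ZMod 4) :
      TetRel q (FreeAlgebra.ι ℂ (tg2 i) * FreeAlgebra.ι ℂ (tg2 (i + 2))) 1
  | qweyl11 (h : ZMod 4) :
      TetRel q ((q - q⁻¹)⁻¹ •
        (q • (FreeAlgebra.ι ℂ (tg1 h) * FreeAlgebra.ι ℂ (tg1 (h + 1)))
          - q⁻¹ • (FreeAlgebra.ι ℂ (tg1 (h + 1)) * FreeAlgebra.ι ℂ (tg1 h)))) 1
  | qweyl12 (h : ZMod 4) :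
      TetRel q ((q - q⁻¹)⁻¹ •
        (q • (FreeAlgebra.ι ℂ (tg1 h) * FreeAlgebra.ι ℂ (tg2 (h + 1)))
          - q⁻¹ • (FreeAlgebra.ι ℂ (tg2 (h + 1)) * FreeAlgebra.ι ℂ (tg1 h)))) 1
  | qweyl21 (h : ZMod 4) :
      TetRel q ((q - q⁻¹)⁻¹ •
        (q • (FreeAlgebra.ι ℂ (tg2 h) * FreeAlgebra.ι ℂ (tg1 (h + 2)))
          - q⁻¹ • (FreeAlgebra.ι ℂ (tg1 (h + 2)) * FreeAlgebra.ι ℂ (tg2 h)))) 1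
  | qserre (h : ZMod 4) :
      TetRel q
        (FreeAlgebra.ι ℂ (tg1 h) ^ 3 * FreeAlgebra.ι ℂ (tg1 (h + 2))
          - brq3 q • (FreeAlgebra.ι ℂ (tg1 h) ^ 2 * FreeAlgebra.ι ℂ (tg1 (h + 2)) * FreeAlgebra.ι ℂ (tg1 h))
          + brq3 q • (FreeAlgebra.ι ℂ (tg1 h) * FreeAlgebra.ι ℂ (tg1 (h + 2)) * FreeAlgebra.ι ℂ (tg1 h) ^ 2)
          - FreeAlgebra.ι ℂ (tg1 (h + 2)) * FreeAlgebra.ι ℂ (tg1 h) ^ 3) 0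

/-- The q-tetrahedron algebra ⊠_q. -/
abbrev TetAlg (q : ℂ) := RingQuot (TetRel q)

/-- The generator x_{i,i+1} of ⊠_q. -/
def tetX1 (q : ℂ) (i : ZMod 4) : TetAlg q :=
  RingQuot.mkAlgHom ℂ (TetRel q) (FreeAlgebra.ι ℂ (tg1 i))

/-- The generator x_{i,i+2} of ⊠_q. -/
def tetX2 (q : ℂ) (i : ZMod 4) : TetAlg q :=
  RingQuot.mkAlgHom ℂ (TetRel q) (FreeAlgebra.ι ℂ (tg2 i))


open UqEGen in
def eGen (i : ZMod 4) : UqEGen → TetGen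
  | x => tg2 i
  | xinv => tg2 (i + 2)
  | y => tg1 (i + 2)
  | z => tg1 (i + 3)

/-- For each i ∈ ℤ/4 there is an algebra homomorphism U_q(sl₂) → ⊠_q sending
x ↦ x_{i,i+2}, x⁻¹ ↦ x_{i+2,i}, y ↦ x_{i+2,i+3}, z ↦ x_{i+3,i}. -/

theorem stmt_9 (q : ℂ) (hq : q ≠ 0) (hq2 : q ^ 2 ≠ 1) (i : ZMod 4) :
    ∃ f : UqEAlg q →ₐ[ℂ] TetAlg q,
      f (uqX q) = tetX2 q i ∧
      f (uqXinv q) = tetX2 q (i + 2) ∧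
      f (uqY q) = tetX1 q (i + 2) ∧
      f (uqZ q) = tetX1 q (i + 3) := by
  have h22 : i + 2 + 2 = i := by fin_cases i <;> rfl
  have h21 : i + 2 + 1 = i + 3 := by fin_cases i <;> decide
  have h31 : i + 3 + 1 = i := by fin_cases i <;> rfl
  set φ : FreeAlgebra ℂ UqEGen →ₐ[ℂ] TetAlg q :=
    (RingQuot.mkAlgHom ℂ (TetRel q)).comp
      (FreeAlgebra.lift ℂ (fun e => FreeAlgebra.ι ℂ (eGen i e))) with hφ
  have hrel : ∀ a b, UqERel q a b → φ a = φ b := by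
    intro a b h
    cases h with
    | xxinv =>
        simpa [hφ, eGen] using RingQuot.mkAlgHom_rel ℂ (TetRel.inv (q := q) i)
    | xinvx =>
        simpa [hφ, eGen, h22] using RingQuot.mkAlgHom_rel ℂ (TetRel.inv (q := q) (i + 2))
    | xy =>
        simpa [hφ, eGen] using RingQuot.mkAlgHom_rel ℂ (TetRel.qweyl21 (q := q) i)
    | yz =>
        simpa [hφ, eGen, h21] using RingQuot.mkAlgHom_rel ℂ (TetRel.qweyl11 (q := q) (i + 2))
    | zx =>
        simpa [hφ, eGen, h31] using RingQuot.mkAlgHom_rel ℂ (TetRel.qweyl12 (q := q) (i + 3))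
  refine ⟨RingQuot.liftAlgHom ℂ ⟨φ, hrel⟩, ?_, ?_, ?_, ?_⟩ <;>
    simp [uqX, uqXinv, uqY, uqZ, RingQuot.liftAlgHom_mkAlgHom_apply, hφ, eGen, tetX1, tetX2]

end
end

section
/- For each i ∈ ℤ/4ℤ there exists a ℂ-algebra homomorphism from U_q(\widehat{sl}_2) (in the presentation with generators x_i^{±1}, y_i, z_i, i ∈ {0,1}) to ⊠_q sending x_1 ↦ x_{i,i+2}, x_1^{-1} ↦ x_{i+2,i}, y_1 ↦ x_{i+2,i+3}, z_1 ↦ x_{i+3,i}, x_0 ↦ x_{i+2,i}, x_0^{-1} ↦ x_{i,i+2}, y_0 ↦ x_{i,i+1}, z_0 ↦ x_{i+1,i+2}. -/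
noncomputable section

/-- Generators of U_q(ŝl₂) in the equitable-type presentation. -/
inductive UqAGen : Type
  | x (i : Fin 2) | xinv (i : Fin 2) | y (i : Fin 2) | z (i : Fin 2)

namespace UqAGen

def ax (g : UqAGen) : FreeAlgebra ℂ UqAGen := FreeAlgebra.ι ℂ g

end UqAGen

open UqAGen in
/-- Relations of U_q(ŝl₂). -/
inductive UqARel (q : ℂ) : FreeAlgebra ℂ UqAGen → FreeAlgebra ℂ UqAGen → Prop
  | xxinv (i : Fin 2) : UqARel q (ax (x i) * ax (xinv i)) 1
  | xinvx (i : Fin 2) : UqARel q (ax (xinv i) * ax (x i)) 1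
  | central (a : FreeAlgebra ℂ UqAGen) :
      UqARel q ((ax (x 0) * ax (x 1)) * a) (a * (ax (x 0) * ax (x 1)))
  | xy (i : Fin 2) : UqARel q ((q - q⁻¹)⁻¹ •
      (q • (ax (x i) * ax (y i)) - q⁻¹ • (ax (y i) * ax (x i)))) 1
  | yz (i : Fin 2) : UqARel q ((q - q⁻¹)⁻¹ •
      (q • (ax (y i) * ax (z i)) - q⁻¹ • (ax (z i) * ax (y i)))) 1
  | zx (i : Fin 2) : UqARel q ((q - q⁻¹)⁻¹ •
      (q • (ax (z i) * ax (x i)) - q⁻¹ • (ax (x i) * ax (z i)))) 1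
  | zy (i j : Fin 2) (hij : i ≠ j) : UqARel q ((q - q⁻¹)⁻¹ •
      (q • (ax (z i) * ax (y j)) - q⁻¹ • (ax (y j) * ax (z i))))
      (ax (xinv 0) * ax (xinv 1))
  | yserre (i j : Fin 2) (hij : i ≠ j) : UqARel q
      (ax (y i) ^ 3 * ax (y j) - brq3 q • (ax (y i) ^ 2 * ax (y j) * ax (y i))
        + brq3 q • (ax (y i) * ax (y j) * ax (y i) ^ 2) - ax (y j) * ax (y i) ^ 3) 0
  | zserre (i j : Fin 2) (hij : i ≠ j) : UqARel q
      (ax (z i) ^ 3 * ax (z j) - brq3 q • (ax (z i) ^ 2 * ax (z j) * ax (z i))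
        + brq3 q • (ax (z i) * ax (z j) * ax (z i) ^ 2) - ax (z j) * ax (z i) ^ 3) 0

/-- The quantum affine algebra U_q(ŝl₂). -/
abbrev UqAAlg (q : ℂ) := RingQuot (UqARel q)

def aGen (q : ℂ) (g : UqAGen) : UqAAlg q := RingQuot.mkAlgHom ℂ (UqARel q) (FreeAlgebra.ι ℂ g)


section Aux
variable (q : ℂ)

lemma tinv (i : ZMod 4) : tetX2 q i * tetX2 q (i + 2) = 1 := by
  have := RingQuot.mkAlgHom_rel ℂ (TetRel.inv (q := q) i)
  simpa [tetX2, map_mul] using this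

lemma t11 (h : ZMod 4) : (q - q⁻¹)⁻¹ •
    (q • (tetX1 q h * tetX1 q (h + 1)) - q⁻¹ • (tetX1 q (h + 1) * tetX1 q h)) = 1 := by
  have := RingQuot.mkAlgHom_rel ℂ (TetRel.qweyl11 (q := q) h)
  simpa [tetX1, map_mul, map_smul, map_sub] using this

lemma t12 (h : ZMod 4) : (q - q⁻¹)⁻¹ •
    (q • (tetX1 q h * tetX2 q (h + 1)) - q⁻¹ • (tetX2 q (h + 1) * tetX1 q h)) = 1 := by
  have := RingQuot.mkAlgHom_rel ℂ (TetRel.qweyl12 (q := q) h)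
  simpa [tetX1, tetX2, map_mul, map_smul, map_sub] using this

lemma t21 (h : ZMod 4) : (q - q⁻¹)⁻¹ •
    (q • (tetX2 q h * tetX1 q (h + 2)) - q⁻¹ • (tetX1 q (h + 2) * tetX2 q h)) = 1 := by
  have := RingQuot.mkAlgHom_rel ℂ (TetRel.qweyl21 (q := q) h)
  simpa [tetX1, tetX2, map_mul, map_smul, map_sub] using this

lemma tserre (h : ZMod 4) :
    tetX1 q h ^ 3 * tetX1 q (h + 2)
      - brq3 q • (tetX1 q h ^ 2 * tetX1 q (h + 2) * tetX1 q h)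
      + brq3 q • (tetX1 q h * tetX1 q (h + 2) * tetX1 q h ^ 2)
      - tetX1 q (h + 2) * tetX1 q h ^ 3 = 0 := by
  have := RingQuot.mkAlgHom_rel ℂ (TetRel.qserre (q := q) h)
  simpa [tetX1, map_mul, map_smul, map_sub, map_add, map_pow] using this

end Aux


open UqAGen in
/-- The intended image of each generator. -/
def Tmap (q : ℂ) (i : ZMod 4) : UqAGen → TetAlg q
  | .x j => if j = 0 then tetX2 q (i + 2) else tetX2 q i
  | .xinv j => if j = 0 then tetX2 q i else tetX2 q (i + 2)
  | .y j => if j = 0 then tetX1 q i else tetX1 q (i + 2)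
  | .z j => if j = 0 then tetX1 q (i + 1) else tetX1 q (i + 3)

section TmapLemmas
variable (q : ℂ) (i : ZMod 4)
open UqAGen

lemma Tmap_x0 : Tmap q i (x 0) = tetX2 q (i + 2) := rfl
lemma Tmap_x1 : Tmap q i (x 1) = tetX2 q i := rfl
lemma Tmap_xinv0 : Tmap q i (xinv 0) = tetX2 q i := rfl
lemma Tmap_xinv1 : Tmap q i (xinv 1) = tetX2 q (i + 2) := rfl
lemma Tmap_y0 : Tmap q i (y 0) = tetX1 q i := rfl
lemma Tmap_y1 : Tmap q i (y 1) = tetX1 q (i + 2) := rfl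
lemma Tmap_z0 : Tmap q i (z 0) = tetX1 q (i + 1) := rfl
lemma Tmap_z1 : Tmap q i (z 1) = tetX1 q (i + 3) := rfl

end TmapLemmas

open UqAGen in
/-- For each i ∈ ℤ/4 there is an algebra homomorphism U_q(ŝl₂) → ⊠_q with
x₁ ↦ x_{i,i+2}, x₁⁻¹ ↦ x_{i+2,i}, y₁ ↦ x_{i+2,i+3}, z₁ ↦ x_{i+3,i},
x₀ ↦ x_{i+2,i}, x₀⁻¹ ↦ x_{i,i+2}, y₀ ↦ x_{i,i+1}, z₀ ↦ x_{i+1,i+2}. -/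
theorem stmt_10 (q : ℂ) (hq : q ≠ 0) (hq2 : q ^ 2 ≠ 1) (i : ZMod 4) :
    ∃ f : UqAAlg q →ₐ[ℂ] TetAlg q,
      f (aGen q (x 1)) = tetX2 q i ∧
      f (aGen q (xinv 1)) = tetX2 q (i + 2) ∧
      f (aGen q (y 1)) = tetX1 q (i + 2) ∧
      f (aGen q (z 1)) = tetX1 q (i + 3) ∧
      f (aGen q (x 0)) = tetX2 q (i + 2) ∧
      f (aGen q (xinv 0)) = tetX2 q i ∧
      f (aGen q (y 0)) = tetX1 q i ∧
      f (aGen q (z 0)) = tetX1 q (i + 1) := by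
  have e22 : i + 2 + 2 = i := by
    rw [add_assoc, show (2 + 2 : ZMod 4) = 0 from rfl, add_zero]
  have e31 : i + 3 + 1 = i := by
    rw [add_assoc, show (3 + 1 : ZMod 4) = 0 from rfl, add_zero]
  have e11 : i + 1 + 1 = i + 2 := by
    rw [add_assoc, show (1 + 1 : ZMod 4) = 2 from rfl]
  have e13 : i + 1 + 3 = i := by
    rw [add_assoc, show (1 + 3 : ZMod 4) = 0 from rfl, add_zero]
  have e21 : i + 2 + 1 = i + 3 := by
    rw [add_assoc, show (2 + 1 : ZMod 4) = 3 from rfl]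
  have e12 : i + 1 + 2 = i + 3 := by
    rw [add_assoc, show (1 + 2 : ZMod 4) = 3 from rfl]
  have e32 : i + 3 + 2 = i + 1 := by
    rw [add_assoc, show (3 + 2 : ZMod 4) = 1 from rfl]
  have e33 : i + 3 + 3 = i + 2 := by
    rw [add_assoc, show (3 + 3 : ZMod 4) = 2 from rfl]
  have h1 : tetX2 q i * tetX2 q (i + 2) = 1 := tinv q i
  have h1' : tetX2 q (i + 2) * tetX2 q i = 1 := by
    have := tinv q (i + 2); rwa [e22] at this
  set φ : FreeAlgebra ℂ UqAGen →ₐ[ℂ] TetAlg q := FreeAlgebra.lift ℂ (Tmap q i) with hφ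
  have hφι : ∀ g, φ (ax g) = Tmap q i g := fun g => FreeAlgebra.lift_ι_apply _ _
  have key : ∀ a b, UqARel q a b → φ a = φ b := by
    intro a b r
    induction r with
    | xxinv j =>
      fin_cases j <;>
        simp only [map_mul, map_one, hφι, Tmap_x0, Tmap_x1, Tmap_xinv0, Tmap_xinv1]
      · exact h1'
      · exact h1
    | xinvx j =>
      fin_cases j <;>
        simp only [map_mul, map_one, hφι, Tmap_x0, Tmap_x1, Tmap_xinv0, Tmap_xinv1]
      · exact h1
      · exact h1'
    | central a =>
      simp only [map_mul, hφι, Tmap_x0, Tmap_x1]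
      rw [← mul_assoc, h1', one_mul, mul_assoc, h1', mul_one]
    | xy j =>
      fin_cases j <;>
        simp only [map_smul, map_sub, map_mul, map_one, hφι, Tmap_x0, Tmap_x1, Tmap_y0, Tmap_y1]
      · have := t21 q (i + 2); rwa [e22] at this
      · exact t21 q i
    | yz j =>
      fin_cases j <;>
        simp only [map_smul, map_sub, map_mul, map_one, hφι, Tmap_y0, Tmap_y1, Tmap_z0, Tmap_z1]
      · exact t11 q i
      · have := t11 q (i + 2); rwa [e21] at this
    | zx j =>
      fin_cases j <;>
        simp only [map_smul, map_sub, map_mul, map_one, hφι, Tmap_x0, Tmap_x1, Tmap_z0, Tmap_z1]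
      · have := t12 q (i + 1); rwa [e11] at this
      · have := t12 q (i + 3); rwa [e31] at this
    | zy j k hjk =>
      fin_cases j <;> fin_cases k
      · exact absurd rfl hjk
      · simp only [map_smul, map_sub, map_mul, hφι, Tmap_y1, Tmap_z0, Tmap_xinv0, Tmap_xinv1]
        rw [h1]
        have := t11 q (i + 1); rwa [e11] at this
      · simp only [map_smul, map_sub, map_mul, hφι, Tmap_y0, Tmap_z1, Tmap_xinv0, Tmap_xinv1]
        rw [h1]
        have := t11 q (i + 3); rwa [e31] at this
      · exact absurd rfl hjk
    | yserre j k hjk =>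
      fin_cases j <;> fin_cases k
      · exact absurd rfl hjk
      · simp only [map_sub, map_add, map_smul, map_mul, map_pow, map_zero, hφι, Tmap_y0, Tmap_y1]
        exact tserre q i
      · simp only [map_sub, map_add, map_smul, map_mul, map_pow, map_zero, hφι, Tmap_y0, Tmap_y1]
        have := tserre q (i + 2); rwa [e22] at this
      · exact absurd rfl hjk
    | zserre j k hjk =>
      fin_cases j <;> fin_cases k
      · exact absurd rfl hjk
      · simp only [map_sub, map_add, map_smul, map_mul, map_pow, map_zero, hφι, Tmap_z0, Tmap_z1]
        have := tserre q (i + 1); rwa [e12] at this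
      · simp only [map_sub, map_add, map_smul, map_mul, map_pow, map_zero, hφι, Tmap_z0, Tmap_z1]
        have := tserre q (i + 3); rwa [e32] at this
      · exact absurd rfl hjk
  refine ⟨RingQuot.liftAlgHom ℂ ⟨φ, key⟩, ?_, ?_, ?_, ?_, ?_, ?_, ?_, ?_⟩ <;>
    rw [aGen, RingQuot.liftAlgHom_mkAlgHom_apply] <;>
    first
      | exact hφι _ ▸ Tmap_x1 q i
      | exact hφι _ ▸ Tmap_xinv1 q i
      | exact hφι _ ▸ Tmap_y1 q i
      | exact hφι _ ▸ Tmap_z1 q i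
      | exact hφι _ ▸ Tmap_x0 q i
      | exact hφι _ ▸ Tmap_xinv0 q i
      | exact hφι _ ▸ Tmap_y0 q i
      | exact hφι _ ▸ Tmap_z0 q i
end
end

section
/- Let A_q be the ℂ-algebra with generators x, y subject to the cubic q-Serre relations x^3 y - [3]_q x^2 y x + [3]_q x y x^2 - y x^3 = 0 and y^3 x - [3]_q y^2 x y + [3]_q y x y^2 - x y^3 = 0. Then for each i ∈ ℤ/4ℤ there exists a ℂ-algebra homomorphism from A_q to ⊠_q sending x ↦ x_{i,i+1} and y ↦ x_{i+2,i+3}. -/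
noncomputable section

/-- Generators of A_q, the positive part of U_q(ŝl₂). -/
inductive AqGen : Type | x | y

open AqGen in
/-- The cubic q-Serre relations defining A_q. -/
inductive AqRel (q : ℂ) : FreeAlgebra ℂ AqGen → FreeAlgebra ℂ AqGen → Prop
  | serreX : AqRel q
      (FreeAlgebra.ι ℂ x ^ 3 * FreeAlgebra.ι ℂ y
        - brq3 q • (FreeAlgebra.ι ℂ x ^ 2 * FreeAlgebra.ι ℂ y * FreeAlgebra.ι ℂ x)
        + brq3 q • (FreeAlgebra.ι ℂ x * FreeAlgebra.ι ℂ y * FreeAlgebra.ι ℂ x ^ 2)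
        - FreeAlgebra.ι ℂ y * FreeAlgebra.ι ℂ x ^ 3) 0
  | serreY : AqRel q
      (FreeAlgebra.ι ℂ y ^ 3 * FreeAlgebra.ι ℂ x
        - brq3 q • (FreeAlgebra.ι ℂ y ^ 2 * FreeAlgebra.ι ℂ x * FreeAlgebra.ι ℂ y)
        + brq3 q • (FreeAlgebra.ι ℂ y * FreeAlgebra.ι ℂ x * FreeAlgebra.ι ℂ y ^ 2)
        - FreeAlgebra.ι ℂ x * FreeAlgebra.ι ℂ y ^ 3) 0

/-- The algebra A_q. -/
abbrev AqAlg (q : ℂ) := RingQuot (AqRel q)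

def aqX (q : ℂ) : AqAlg q := RingQuot.mkAlgHom ℂ (AqRel q) (FreeAlgebra.ι ℂ AqGen.x)
def aqY (q : ℂ) : AqAlg q := RingQuot.mkAlgHom ℂ (AqRel q) (FreeAlgebra.ι ℂ AqGen.y)

/-- For each i ∈ ℤ/4 there is an algebra homomorphism A_q → ⊠_q sending
x ↦ x_{i,i+1}, y ↦ x_{i+2,i+3}. -/
theorem stmt_11 (q : ℂ) (hq : q ≠ 0) (hq2 : q ^ 2 ≠ 1) (i : ZMod 4) :
    ∃ f : AqAlg q →ₐ[ℂ] TetAlg q,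
      f (aqX q) = tetX1 q i ∧ f (aqY q) = tetX1 q (i + 2) := by
  let φ : FreeAlgebra ℂ AqGen →ₐ[ℂ] TetAlg q :=
    FreeAlgebra.lift ℂ (fun g => match g with
      | AqGen.x => tetX1 q i
      | AqGen.y => tetX1 q (i + 2))
  have hii : i + 2 + 2 = i := by
    rw [add_assoc, show (2 : ZMod 4) + 2 = 0 from rfl, add_zero]
  have hrel : ∀ ⦃a b⦄, AqRel q a b → φ a = φ b := by
    intro a b h
    cases h with
    | serreX =>
        have := RingQuot.mkAlgHom_rel ℂ (TetRel.qserre (q := q) i)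
        simpa [φ, tetX1, map_sub, map_add, map_mul, map_pow, map_smul] using this
    | serreY =>
        have := RingQuot.mkAlgHom_rel ℂ (TetRel.qserre (q := q) (i + 2))
        rw [hii] at this
        simpa [φ, tetX1, map_sub, map_add, map_mul, map_pow, map_smul] using this
  exact ⟨RingQuot.liftAlgHom ℂ ⟨φ, hrel⟩,
    by simp [aqX, RingQuot.liftAlgHom_mkAlgHom_apply, φ, tetX1],
    by simp [aqY, RingQuot.liftAlgHom_mkAlgHom_apply, φ, tetX1]⟩

end
end

section
/- Let V be a finite-dimensional complex inner product space, and let T ⊆ End(V) be a subalgebra closed under adjoints. Let T' be the set of all operators on V that leave invariant every irreducible T-submodule of V. Then T' = T. -/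
open LinearMap Submodule

local notation "⟪" x ", " y "⟫" => @inner ℂ _ _ x y

/-- If the adjoint of `f` preserves `W`, then `f` preserves `Wᗮ`. -/
lemma aux_orth15 {E : Type*} [NormedAddCommGroup E] [InnerProductSpace ℂ E]
    [FiniteDimensional ℂ E]
    (f : E →ₗ[ℂ] E) (W : Submodule ℂ E) (h : ∀ w ∈ W, LinearMap.adjoint f w ∈ W) :
    ∀ w ∈ Wᗮ, f w ∈ Wᗮ := by
  intro w hw
  rw [Submodule.mem_orthogonal]
  intro v hv
  rw [← LinearMap.adjoint_inner_left]
  exact (Submodule.mem_orthogonal W w).mp hw _ (h v hv)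

/-- Step B: `M` preserves every `T`-invariant subspace. -/
lemma aux_B15 {V : Type} [NormedAddCommGroup V] [InnerProductSpace ℂ V]
    [FiniteDimensional ℂ V]
    (T : Subalgebra ℂ (V →ₗ[ℂ] V)) (hT : ∀ f ∈ T, LinearMap.adjoint f ∈ T)
    (M : V →ₗ[ℂ] V)
    (hM : ∀ W : Submodule ℂ V, (∀ f ∈ T, ∀ w ∈ W, f w ∈ W) → W ≠ ⊥ →
      (∀ U : Submodule ℂ V, U ≤ W → (∀ f ∈ T, ∀ u ∈ U, f u ∈ U) → U = ⊥ ∨ U = W) →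
      ∀ w ∈ W, M w ∈ W) :
    ∀ W : Submodule ℂ V, (∀ f ∈ T, ∀ w ∈ W, f w ∈ W) → ∀ w ∈ W, M w ∈ W := by
  suffices H : ∀ n (W : Submodule ℂ V), Module.finrank ℂ W = n →
      (∀ f ∈ T, ∀ w ∈ W, f w ∈ W) → ∀ w ∈ W, M w ∈ W by
    exact fun W hW => H _ W rfl hW
  intro n
  induction n using Nat.strong_induction_on with
  | _ n ih =>
    intro W hrank hW
    by_cases hbot : W = ⊥
    · subst hbot
      intro w hw
      rw [Submodule.mem_bot] at hw
      simp [hw]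
    -- the set of possible ranks of nonzero invariant subspaces of W
    have hSne : ∃ k, ∃ U : Submodule ℂ V, U ≤ W ∧ U ≠ ⊥ ∧
        (∀ f ∈ T, ∀ w ∈ U, f w ∈ U) ∧ Module.finrank ℂ U = k :=
      ⟨Module.finrank ℂ W, W, le_rfl, hbot, hW, rfl⟩
    classical
    obtain ⟨W₀, hW₀W, hW₀ne, hW₀inv, hW₀rank⟩ := Nat.find_spec hSne
    -- W₀ is irreducible
    have hirr : ∀ U : Submodule ℂ V, U ≤ W₀ → (∀ f ∈ T, ∀ u ∈ U, f u ∈ U) →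
        U = ⊥ ∨ U = W₀ := by
      intro U hUW₀ hUinv
      by_cases hUbot : U = ⊥
      · exact Or.inl hUbot
      right
      have h1 : Nat.find hSne ≤ Module.finrank ℂ U :=
        Nat.find_min' hSne ⟨U, hUW₀.trans hW₀W, hUbot, hUinv, rfl⟩
      have h2 : Module.finrank ℂ U ≤ Module.finrank ℂ W₀ :=
        Submodule.finrank_mono hUW₀
      exact Submodule.eq_of_le_of_finrank_eq hUW₀ (le_antisymm h2 (hW₀rank ▸ h1))
    have hMW₀ : ∀ w ∈ W₀, M w ∈ W₀ := hM W₀ hW₀inv hW₀ne hirr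
    -- W' := W ⊓ W₀ᗮ
    set W' : Submodule ℂ V := W ⊓ W₀ᗮ with hW'def
    have hW'inv : ∀ f ∈ T, ∀ w ∈ W', f w ∈ W' := by
      intro f hf w hw
      exact ⟨hW f hf w hw.1,
        aux_orth15 f W₀ (fun u hu => hW₀inv _ (hT f hf) u hu) w hw.2⟩
    have hW'lt : W' < W := by
      refine lt_of_le_of_ne inf_le_left ?_
      intro hEq
      obtain ⟨x, hx, hxne⟩ := Submodule.exists_mem_ne_zero_of_ne_bot hW₀ne
      have hxW' : x ∈ W' := hEq ▸ hW₀W hx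
      have : x ∈ W₀ ⊓ W₀ᗮ := ⟨hx, hxW'.2⟩
      rw [Submodule.inf_orthogonal_eq_bot, Submodule.mem_bot] at this
      exact hxne this
    have hrank' : Module.finrank ℂ W' < n :=
      hrank ▸ Submodule.finrank_lt_finrank_of_lt hW'lt
    have hMW' : ∀ w ∈ W', M w ∈ W' := ih _ hrank' W' rfl hW'inv
    intro w hw
    have hp : (orthogonalProjection W₀ w : V) ∈ W₀ := (orthogonalProjection W₀ w).2
    have hsub : w - orthogonalProjection W₀ w ∈ W' :=
      ⟨W.sub_mem hw (hW₀W hp), Submodule.sub_starProjection_mem_orthogonal (K := W₀) w⟩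
    have : M w = M (orthogonalProjection W₀ w) + M (w - orthogonalProjection W₀ w) := by
      rw [← map_add]; congr 1; abel
    rw [this]
    exact W.add_mem (hW₀W (hMW₀ _ hp)) ((inf_le_left : W' ≤ W) (hMW' _ hsub))

/-- Step C, symmetric case: `M` commutes with every symmetric element of the commutant. -/
lemma aux_Csym15 {V : Type} [NormedAddCommGroup V] [InnerProductSpace ℂ V]
    [FiniteDimensional ℂ V]
    (T : Subalgebra ℂ (V →ₗ[ℂ] V)) (M : V →ₗ[ℂ] V)
    (hB : ∀ W : Submodule ℂ V, (∀ f ∈ T, ∀ w ∈ W, f w ∈ W) → ∀ w ∈ W, M w ∈ W)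
    (S : V →ₗ[ℂ] V) (hSsym : S.IsSymmetric)
    (hScomm : ∀ f ∈ T, f ∘ₗ S = S ∘ₗ f) :
    M ∘ₗ S = S ∘ₗ M := by
  have htop : (⨆ μ, Module.End.eigenspace S μ) = ⊤ := by
    rw [← Submodule.orthogonal_eq_bot_iff]
    exact hSsym.orthogonalComplement_iSup_eigenspaces_eq_bot
  have hker : (⊤ : Submodule ℂ V) ≤ LinearMap.ker (M ∘ₗ S - S ∘ₗ M) := by
    rw [← htop]
    refine iSup_le fun μ => ?_
    intro v hv
    have hv' : S v = μ • v := Module.End.mem_eigenspace_iff.mp hv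
    -- eigenspace is T-invariant
    have hinv : ∀ f ∈ T, ∀ w ∈ Module.End.eigenspace S μ, f w ∈ Module.End.eigenspace S μ := by
      intro f hf w hw
      rw [Module.End.mem_eigenspace_iff] at hw ⊢
      have := congrArg (fun g : V →ₗ[ℂ] V => g w) (hScomm f hf)
      simp only [LinearMap.comp_apply] at this
      rw [← this, hw, map_smul]
    have hMv : M v ∈ Module.End.eigenspace S μ := hB _ hinv v hv
    rw [Module.End.mem_eigenspace_iff] at hMv
    simp only [LinearMap.mem_ker, LinearMap.sub_apply, LinearMap.comp_apply, hv', hMv, map_smul,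
      sub_self]
  have : M ∘ₗ S - S ∘ₗ M = 0 := LinearMap.ker_eq_top.mp (top_le_iff.mp hker)
  exact sub_eq_zero.mp this

/-- Step C: `M` commutes with every element of the commutant of `T`. -/
lemma aux_C15 {V : Type} [NormedAddCommGroup V] [InnerProductSpace ℂ V]
    [FiniteDimensional ℂ V]
    (T : Subalgebra ℂ (V →ₗ[ℂ] V)) (hT : ∀ f ∈ T, LinearMap.adjoint f ∈ T)
    (M : V →ₗ[ℂ] V)
    (hB : ∀ W : Submodule ℂ V, (∀ f ∈ T, ∀ w ∈ W, f w ∈ W) → ∀ w ∈ W, M w ∈ W)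
    (S : V →ₗ[ℂ] V) (hScomm : ∀ f ∈ T, f ∘ₗ S = S ∘ₗ f) :
    M ∘ₗ S = S ∘ₗ M := by
  have hSadj : ∀ f ∈ T, f ∘ₗ LinearMap.adjoint S = LinearMap.adjoint S ∘ₗ f := by
    intro f hf
    have h := hScomm (LinearMap.adjoint f) (hT f hf)
    have := congrArg LinearMap.adjoint h
    rw [LinearMap.adjoint_comp, LinearMap.adjoint_comp, LinearMap.adjoint_adjoint] at this
    exact this.symm
  set A : V →ₗ[ℂ] V := S + LinearMap.adjoint S with hAdef
  set B : V →ₗ[ℂ] V := Complex.I • (S - LinearMap.adjoint S) with hBdef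
  have hAsym : A.IsSymmetric := by
    intro x y
    simp only [hAdef, LinearMap.add_apply, inner_add_left, inner_add_right,
      LinearMap.adjoint_inner_left, LinearMap.adjoint_inner_right]
    ring
  have hBsym : B.IsSymmetric := by
    intro x y
    simp only [hBdef, LinearMap.smul_apply, LinearMap.sub_apply, inner_smul_left,
      inner_smul_right, inner_sub_left, inner_sub_right,
      LinearMap.adjoint_inner_left, LinearMap.adjoint_inner_right, Complex.conj_I]
    ring
  have hAcomm : ∀ f ∈ T, f ∘ₗ A = A ∘ₗ f := by
    intro f hf
    ext x
    have h1 := DFunLike.congr_fun (hScomm f hf) x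
    have h2 := DFunLike.congr_fun (hSadj f hf) x
    simp only [LinearMap.comp_apply] at h1 h2
    simp [hAdef, h1, h2]
  have hBcomm : ∀ f ∈ T, f ∘ₗ B = B ∘ₗ f := by
    intro f hf
    ext x
    have h1 := DFunLike.congr_fun (hScomm f hf) x
    have h2 := DFunLike.congr_fun (hSadj f hf) x
    simp only [LinearMap.comp_apply] at h1 h2
    simp [hBdef, h1, h2]
  have hMA := aux_Csym15 T M hB A hAsym hAcomm
  have hMB := aux_Csym15 T M hB B hBsym hBcomm
  have hA' : ∀ x, M (A x) = A (M x) := fun x => by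
    have := DFunLike.congr_fun hMA x; simpa using this
  have hB' : ∀ x, M (B x) = B (M x) := fun x => by
    have := DFunLike.congr_fun hMB x; simpa using this
  have hS : ∀ x, S x = (2⁻¹ : ℂ) • (A x + (-Complex.I) • B x) := by
    intro x
    simp only [hAdef, hBdef, LinearMap.add_apply, LinearMap.smul_apply, LinearMap.sub_apply,
      smul_smul]
    rw [show (-Complex.I) * Complex.I = 1 by simp [Complex.I_mul_I]]
    rw [one_smul]
    rw [show S x + LinearMap.adjoint S x + (S x - LinearMap.adjoint S x) = (2:ℂ) • S x by
      rw [two_smul]; abel]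
    rw [smul_smul]
    norm_num
  ext x
  simp only [LinearMap.comp_apply]
  rw [hS x, map_smul, map_add, map_smul, hA' x, hB' x, ← hS (M x)]

lemma aux_D15 {V : Type} [NormedAddCommGroup V] [InnerProductSpace ℂ V]
    [FiniteDimensional ℂ V]
    (T : Subalgebra ℂ (V →ₗ[ℂ] V)) (hT : ∀ f ∈ T, LinearMap.adjoint f ∈ T)
    (M : V →ₗ[ℂ] V)
    (hC : ∀ S : V →ₗ[ℂ] V, (∀ f ∈ T, f ∘ₗ S = S ∘ₗ f) → M ∘ₗ S = S ∘ₗ M) :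
    M ∈ T := by
  classical
  set n := Module.finrank ℂ V with hn
  set b : Module.Basis (Fin n) ℂ V := Module.finBasis ℂ V with hb
  let eqv : (PiLp 2 (fun _ : Fin n => V)) ≃ₗ[ℂ] (Fin n → V) :=
    WithLp.linearEquiv 2 ℂ (Fin n → V)
  let diag : (V →ₗ[ℂ] V) → (PiLp 2 (fun _ : Fin n => V) →ₗ[ℂ] PiLp 2 (fun _ : Fin n => V)) :=
    fun g => eqv.symm.toLinearMap ∘ₗ (LinearMap.pi fun i => g ∘ₗ LinearMap.proj i) ∘ₗ
      eqv.toLinearMap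
  have hdiag : ∀ g (x : PiLp 2 (fun _ : Fin n => V)) (i : Fin n), (diag g x) i = g (x i) :=
    fun g x i => rfl
  let φ : (V →ₗ[ℂ] V) →ₗ[ℂ] PiLp 2 (fun _ : Fin n => V) :=
    eqv.symm.toLinearMap ∘ₗ (LinearMap.pi fun i => LinearMap.applyₗ (b i))
  have hφ : ∀ g (i : Fin n), (φ g) i = g (b i) := fun g i => rfl
  let W : Submodule ℂ (PiLp 2 (fun _ : Fin n => V)) := (Subalgebra.toSubmodule T).map φ
  -- diag f preserves W for f ∈ T
  have hWinv : ∀ f ∈ T, ∀ x ∈ W, diag f x ∈ W := by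
    rintro f hf x ⟨g, hg, rfl⟩
    have hg' : g ∈ T := hg
    refine ⟨f * g, (Subalgebra.mem_toSubmodule T).mpr (mul_mem hf hg'), ?_⟩
    apply PiLp.ext
    intro i
    rw [hφ, hdiag, hφ]
    rfl
  -- adjoint of diag f is diag (adjoint f)
  have hadj : ∀ f, LinearMap.adjoint (diag f) = diag (LinearMap.adjoint f) := by
    intro f
    symm
    rw [LinearMap.eq_adjoint_iff]
    intro x y
    rw [PiLp.inner_apply, PiLp.inner_apply]
    refine Finset.sum_congr rfl fun i _ => ?_
    rw [hdiag, hdiag, LinearMap.adjoint_inner_left]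
  -- the orthogonal projection onto W as an endomorphism
  let P : PiLp 2 (fun _ : Fin n => V) →ₗ[ℂ] PiLp 2 (fun _ : Fin n => V) :=
    W.subtype ∘ₗ (orthogonalProjection W).toLinearMap
  have hPW : ∀ x, P x ∈ W := fun x => (orthogonalProjection W x).2
  have hPval : ∀ x, P x = (orthogonalProjection W x : PiLp 2 (fun _ : Fin n => V)) :=
    fun x => rfl
  have hPmem : ∀ x, x ∈ W → P x = x := by
    intro x hx
    rw [hPval]
    exact Submodule.eq_starProjection_of_mem_orthogonal (K := W) hx (by simp)
  -- diag f commutes with P for f ∈ T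
  have hPcomm : ∀ f ∈ T, ∀ x, diag f (P x) = P (diag f x) := by
    intro f hf x
    rw [hPval, hPval]
    symm
    apply Submodule.eq_starProjection_of_mem_orthogonal (K := W) (u := diag f x)
    · rw [← hPval]; exact hWinv f hf _ (hPW x)
    · rw [← hPval]
      have : diag f x - diag f (P x) = diag f (x - P x) := by rw [map_sub]
      rw [this]
      refine aux_orth15 (diag f) W ?_ _ (Submodule.sub_starProjection_mem_orthogonal (K := W) x)
      intro w hw
      rw [hadj]
      exact hWinv _ (hT f hf) w hw
  -- matrix entries of P
  let Pij : Fin n → Fin n → (V →ₗ[ℂ] V) := fun i j =>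
    LinearMap.proj i ∘ₗ eqv.toLinearMap ∘ₗ P ∘ₗ eqv.symm.toLinearMap ∘ₗ
      LinearMap.single ℂ (fun _ : Fin n => V) j
  have hPij : ∀ i j (w : V), Pij i j w = (P (eqv.symm (Pi.single j w))) i := fun i j w => rfl
  -- single lemma for diag
  have hdsingle : ∀ (g : V →ₗ[ℂ] V) (j : Fin n) (w : V),
      diag g (eqv.symm (Pi.single j w)) = eqv.symm (Pi.single j (g w)) := by
    intro g j w
    apply PiLp.ext
    intro i
    rw [hdiag]
    show g ((Pi.single j w : Fin n → V) i) = (Pi.single j (g w) : Fin n → V) i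
    by_cases h : i = j
    · subst h; simp
    · simp [Pi.single_apply, h]
  -- Pij commutes with every f ∈ T
  have hPijcomm : ∀ i j, ∀ f ∈ T, f ∘ₗ Pij i j = Pij i j ∘ₗ f := by
    intro i j f hf
    ext w
    simp only [LinearMap.comp_apply]
    rw [hPij, hPij, ← hdsingle, ← hPcomm f hf, hdiag]
  have hMPij : ∀ i j, M ∘ₗ Pij i j = Pij i j ∘ₗ M := fun i j => hC _ (hPijcomm i j)
  -- decomposition of a vector into singles
  have hx : ∀ x : PiLp 2 (fun _ : Fin n => V),
      x = ∑ j, eqv.symm (Pi.single j (x j)) := by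
    intro x
    apply eqv.injective
    rw [map_sum]
    simp only [LinearEquiv.apply_symm_apply]
    exact (Finset.univ_sum_single (eqv x)).symm
  have happ : ∀ (y : Fin n → PiLp 2 (fun _ : Fin n => V)) (i : Fin n),
      (∑ j, y j) i = ∑ j, (y j) i := by
    intro y i
    show eqv (∑ j, y j) i = ∑ j, (y j) i
    rw [map_sum]
    exact Finset.sum_apply i Finset.univ fun j => eqv (y j)
  -- sum formula for P
  have hsum : ∀ (x : PiLp 2 (fun _ : Fin n => V)) (i : Fin n),
      (P x) i = ∑ j, Pij i j (x j) := by
    intro x i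
    conv_lhs => rw [hx x]
    rw [map_sum, happ]
    exact Finset.sum_congr rfl fun j _ => (hPij i j (x j)).symm
  -- diag M commutes with P
  have hMP : ∀ x, diag M (P x) = P (diag M x) := by
    intro x
    apply PiLp.ext
    intro i
    rw [hdiag, hsum, hsum, map_sum]
    refine Finset.sum_congr rfl fun j _ => ?_
    rw [hdiag]
    have := DFunLike.congr_fun (hMPij i j) (x j)
    simpa using this
  -- conclude
  have hx₀ : φ (1 : V →ₗ[ℂ] V) ∈ W :=
    ⟨1, (Subalgebra.mem_toSubmodule T).mpr T.one_mem, rfl⟩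
  have h1 : P (φ 1) = φ 1 := hPmem _ hx₀
  have h2 : diag M (φ 1) ∈ W := by
    have e1 : diag M (φ 1) = P (diag M (φ 1)) := by
      nth_rewrite 1 [← h1]
      rw [hMP]
    rw [e1]
    exact hPW _
  obtain ⟨g, hg, hgeq⟩ := h2
  have hgT : g ∈ T := hg
  have hgb : ∀ i, g (b i) = M (b i) := by
    intro i
    have h3 := congrArg (fun y : PiLp 2 (fun _ : Fin n => V) => y i) hgeq
    simp only at h3
    rw [hφ, hdiag, hφ] at h3
    simpa using h3
  have : g = M := b.ext hgb
  exact this ▸ hgT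

/-- If T is an adjoint-closed unital subalgebra of operators on a finite-dimensional
complex inner product space, then the set of operators preserving every irreducible
T-submodule is exactly T. -/
theorem stmt_15 (V : Type) [NormedAddCommGroup V] [InnerProductSpace ℂ V]
    [FiniteDimensional ℂ V]
    (T : Subalgebra ℂ (V →ₗ[ℂ] V))
    (hT : ∀ f ∈ T, LinearMap.adjoint f ∈ T) :
    {M : V →ₗ[ℂ] V | ∀ W : Submodule ℂ V,
        (∀ f ∈ T, ∀ w ∈ W, f w ∈ W) → W ≠ ⊥ →
        (∀ U : Submodule ℂ V, U ≤ W → (∀ f ∈ T, ∀ u ∈ U, f u ∈ U) → U = ⊥ ∨ U = W) →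
        ∀ w ∈ W, M w ∈ W}
      = (T : Set (V →ₗ[ℂ] V)) := by
  ext M
  simp only [Set.mem_setOf_eq, SetLike.mem_coe]
  constructor
  · intro hM
    exact aux_D15 T hT M fun S hS =>
      aux_C15 T hT M (aux_B15 T hT M hM) S hS
  · intro hMT W hWinv _ _ w hw
    exact hWinv M hMT w hw
end

section
/- Let q ∈ ℂ be nonzero and not a root of unity. Let V be a finite-dimensional vector space over ℂ, and let W be an irreducible module for the algebra A_q (generators x, y with cubic q-Serre relations) such that x and y each act semisimply on W with eigenvalues {q^{d-2i} : 0 ≤ i ≤ d} for some d ≥ 0 (type (1,1), NonNil). Suppose W also carries a ⊠_q-module structure in which x_{01} acts as x and x_{23} acts as y. Then for any i ∈ ℤ/4ℤ, each generator x_{i,i+1} and x_{i,i+2} of ⊠_q acts semisimply on W with eigenvalues contained in {q^{d-2j} : 0 ≤ j ≤ d}. -/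
noncomputable section

namespace Stmt17Aux

lemma zpow_inj {q : ℂ} (hq : q ≠ 0) (hroot : ∀ n : ℕ, 0 < n → q ^ n ≠ 1)
    {a b : ℤ} (hab : q ^ a = q ^ b) : a = b := by
  by_contra hne
  have key : ∀ c : ℤ, 0 < c → q ^ c ≠ 1 := by
    intro c hc h1
    have : q ^ c.toNat = 1 := by
      rw [← zpow_natCast, Int.toNat_of_nonneg (by omega)]; exact h1
    exact hroot c.toNat (by omega) this
  rcases lt_trichotomy a b with h | h | h
  · exact key (b - a) (by omega) (by rw [zpow_sub₀ hq, ← hab, div_self (zpow_ne_zero _ hq)])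
  · exact hne h
  · exact key (a - b) (by omega) (by rw [zpow_sub₀ hq, hab, div_self (zpow_ne_zero _ hq)])

variable {W : Type} [AddCommGroup W] [Module ℂ W] {q : ℂ}

/-- θ d j = q^(d-2j). -/
def θ (q : ℂ) (d : ℕ) (j : ℕ) : ℂ := q ^ ((d : ℤ) - 2 * (j : ℤ))

lemma θ_ne_zero (hq : q ≠ 0) (d j : ℕ) : θ q d j ≠ 0 := zpow_ne_zero _ hq

lemma θ_inj (hq : q ≠ 0) (hroot : ∀ n : ℕ, 0 < n → q ^ n ≠ 1) {d i j : ℕ}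
    (h : θ q d i = θ q d j) : i = j := by
  have := zpow_inj hq hroot h; omega

/-- Eigenvector under a product of shifted operators. -/
lemma prod_apply_eigen (A : Module.End ℂ W) (d : ℕ) (μ : ℂ) (v : W)
    (hv : A v = μ • v) (n : ℕ) :
    (((List.range n).map
      (fun j : ℕ => A - θ q d j • (1 : Module.End ℂ W))).prod) v
      = (∏ j ∈ Finset.range n, (μ - θ q d j)) • v := by
  induction n with
  | zero => simp
  | succ n ih =>
    rw [List.range_succ, List.map_append, List.prod_append]
    simp only [List.map_cons, List.map_nil, List.prod_cons, List.prod_nil, mul_one]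
    rw [Module.End.mul_apply]
    have h1 : (A - θ q d n • (1 : Module.End ℂ W)) v = (μ - θ q d n) • v := by
      simp [LinearMap.sub_apply, hv, sub_smul]
    rw [h1, map_smul, ih, Finset.prod_range_succ, smul_smul, mul_comm]

lemma commute_shift (A : Module.End ℂ W) (a b : ℂ) :
    Commute (A - a • (1 : Module.End ℂ W)) (A - b • (1 : Module.End ℂ W)) := by
  have h1 : Commute A (A - b • (1 : Module.End ℂ W)) :=
    (Commute.refl A).sub_right ((Commute.one_right A).smul_right b)
  have h2 : Commute (a • (1 : Module.End ℂ W)) (A - b • (1 : Module.End ℂ W)) :=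
    (((Commute.one_left A).smul_left a).sub_right
      (((Commute.one_left (1 : Module.End ℂ W)).smul_left a).smul_right b))
  exact h1.sub_left h2

/-- Vanishing of an eigenvector with eigenvalue outside the spectrum list. -/
lemma eigen_zero_of_ne (A : Module.End ℂ W) (d : ℕ)
    (hA : ((List.range (d+1)).map (fun j : ℕ => A - θ q d j • (1 : Module.End ℂ W))).prod = 0)
    (μ : ℂ) (hμ : ∀ j, j < d + 1 → μ ≠ θ q d j) (v : W) (hv : A v = μ • v) : v = 0 := by
  have h := prod_apply_eigen (q := q) A d μ v hv (d+1)
  rw [hA] at h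
  have hc : (∏ j ∈ Finset.range (d+1), (μ - θ q d j)) ≠ 0 :=
    Finset.prod_ne_zero_iff.mpr fun j hj =>
      sub_ne_zero.mpr (hμ j (Finset.mem_range.mp hj))
  have h0 : (0 : W) = (∏ j ∈ Finset.range (d+1), (μ - θ q d j)) • v := by
    simpa using h
  have := (smul_eq_zero.mp h0.symm).resolve_left hc
  exact this

/-- Pointwise eigen-shift from the Weyl relation. -/
lemma shift_eigen (A B : Module.End ℂ W)
    (rel : A * B = (q⁻¹ ^ 2) • (B * A) + (1 - q⁻¹ ^ 2) • (1 : Module.End ℂ W))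
    (μ : ℂ) (hμ : μ ≠ 0) (v : W) (hv : A v = μ • v) :
    A ((B - μ⁻¹ • (1 : Module.End ℂ W)) v) = (q⁻¹ ^ 2 * μ) • ((B - μ⁻¹ • (1 : Module.End ℂ W)) v) := by
  have hAB : A (B v) = (q⁻¹ ^ 2 * μ) • (B v) + (1 - q⁻¹ ^ 2) • v := by
    have h := congrArg (fun f : Module.End ℂ W => f v) rel
    simp only [Module.End.mul_apply, LinearMap.add_apply, LinearMap.smul_apply,
      Module.End.one_apply] at h
    rw [h, hv, map_smul, smul_smul]
  have hBv : (B - μ⁻¹ • (1 : Module.End ℂ W)) v = B v - μ⁻¹ • v := by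
    simp [LinearMap.sub_apply]
  rw [hBv, map_sub, hAB, map_smul, hv]
  match_scalars
  · ring
  · simp only [mul_one, mul_neg]
    rw [inv_mul_cancel₀ hμ, mul_assoc, mul_inv_cancel₀ hμ]
    ring

lemma theta_succ (hq : q ≠ 0) (d j : ℕ) : q⁻¹ ^ 2 * θ q d j = θ q d (j + 1) := by
  have h2 : q⁻¹ ^ 2 = q ^ (-2 : ℤ) := by
    rw [inv_pow, zpow_neg, zpow_two, sq]
  rw [θ, θ, h2, ← zpow_add₀ hq]
  congr 1
  push_cast
  ring

lemma theta_inv (hq : q ≠ 0) (d j : ℕ) (hj : j ≤ d) : (θ q d j)⁻¹ = θ q d (d - j) := by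
  rw [θ, θ, ← zpow_neg]
  congr 1
  have : ((d - j : ℕ) : ℤ) = (d : ℤ) - (j : ℤ) := by
    push_cast [Nat.cast_sub hj]; ring
  rw [this]; ring

/-- Chain lemma: eigenvectors of A with eigenvalue θ_j are killed by the partial product in B. -/
lemma chain (A B : Module.End ℂ W) (d : ℕ)
    (hq : q ≠ 0) (hroot : ∀ n : ℕ, 0 < n → q ^ n ≠ 1)
    (rel : A * B = (q⁻¹ ^ 2) • (B * A) + (1 - q⁻¹ ^ 2) • (1 : Module.End ℂ W))
    (hA : ((List.range (d+1)).map (fun j : ℕ => A - θ q d j • (1 : Module.End ℂ W))).prod = 0) :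
    ∀ m j, j + m = d + 1 → ∀ v : W, A v = θ q d j • v →
      (((List.range m).map (fun i : ℕ => B - θ q d i • (1 : Module.End ℂ W))).prod) v = 0 := by
  intro m
  induction m with
  | zero =>
    intro j hj v hv
    have hv0 : v = 0 := by
      refine eigen_zero_of_ne A d hA (θ q d j) (fun i hi hne => ?_) v hv
      have := θ_inj hq hroot hne
      omega
    simp [hv0]
  | succ m ih =>
    intro j hj v hv
    have hjd : j ≤ d := by omega
    have hm : m = d - j := by omega
    rw [List.range_succ, List.map_append, List.prod_append]
    simp only [List.map_cons, List.map_nil, List.prod_cons, List.prod_nil, mul_one]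
    rw [Module.End.mul_apply]
    have hinv : θ q d m = (θ q d j)⁻¹ := by
      rw [theta_inv hq d j hjd, hm]
    have hw : A ((B - θ q d m • (1 : Module.End ℂ W)) v)
        = θ q d (j+1) • ((B - θ q d m • (1 : Module.End ℂ W)) v) := by
      rw [hinv]
      rw [← theta_succ hq d j]
      exact shift_eigen A B rel (θ q d j) (θ_ne_zero hq d j) v hv
    exact ih (j+1) (by omega) _ hw

/-- Primary decomposition: a vector killed by the product lies in the sup of the kernels. -/
lemma decomp (A : Module.End ℂ W) (d : ℕ)
    (hq : q ≠ 0) (hroot : ∀ n : ℕ, 0 < n → q ^ n ≠ 1) :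
    ∀ n (v : W),
      (((List.range n).map (fun j : ℕ => A - θ q d j • (1 : Module.End ℂ W))).prod) v = 0 →
      v ∈ ⨆ j ∈ Finset.range n, LinearMap.ker (A - θ q d j • (1 : Module.End ℂ W)) := by
  intro n
  induction n with
  | zero =>
    intro v hv
    simp only [List.range_zero, List.map_nil, List.prod_nil, Module.End.one_apply] at hv
    simp [hv]
  | succ n ih =>
    intro v hv
    set P : Module.End ℂ W :=
      ((List.range n).map (fun j : ℕ => A - θ q d j • (1 : Module.End ℂ W))).prod with hP
    have hsplit : (((List.range (n+1)).map
        (fun j : ℕ => A - θ q d j • (1 : Module.End ℂ W))).prod)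
        = P * (A - θ q d n • (1 : Module.End ℂ W)) := by
      rw [List.range_succ, List.map_append, List.prod_append]
      simp
      rfl
    have hw : P ((A - θ q d n • (1 : Module.End ℂ W)) v) = 0 := by
      rw [← Module.End.mul_apply, ← hsplit]; exact hv
    -- the sup of the first n kernels is killed by P
    have hUker : (⨆ j ∈ Finset.range n, LinearMap.ker (A - θ q d j • (1 : Module.End ℂ W)))
        ≤ LinearMap.ker P := by
      refine iSup₂_le fun j hj => ?_
      intro x hx
      have hxe : A x = θ q d j • x := by
        have hx' : (A - θ q d j • (1 : Module.End ℂ W)) x = 0 := hx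
        have := sub_eq_zero.mp hx'
        simpa using this
      have hPx := prod_apply_eigen (q := q) A d (θ q d j) x hxe n
      rw [LinearMap.mem_ker, hP, hPx]
      have : (∏ i ∈ Finset.range n, (θ q d j - θ q d i)) = 0 :=
        Finset.prod_eq_zero hj (sub_self _)
      rw [this, zero_smul]
    set c : ℂ := ∏ i ∈ Finset.range n, (θ q d n - θ q d i) with hc
    have hcne : c ≠ 0 := by
      refine Finset.prod_ne_zero_iff.mpr fun i hi => sub_ne_zero.mpr fun he => ?_
      have := θ_inj hq hroot he
      have := Finset.mem_range.mp hi
      omega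
    set u : W := c⁻¹ • (P v) with hu
    have hcomm : (A - θ q d n • (1 : Module.End ℂ W)) * P
        = P * (A - θ q d n • (1 : Module.End ℂ W)) := by
      have : Commute (A - θ q d n • (1 : Module.End ℂ W)) P := by
        refine Commute.list_prod_right _ _ fun x hx => ?_
        obtain ⟨j, _, rfl⟩ := List.mem_map.mp hx
        exact commute_shift A _ _
      exact this.eq
    have huker : (A - θ q d n • (1 : Module.End ℂ W)) u = 0 := by
      rw [hu, map_smul, ← Module.End.mul_apply, hcomm, Module.End.mul_apply, hw]
      simp
    have hue : A u = θ q d n • u := by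
      have h0 : A u - θ q d n • u = 0 := by simpa using huker
      exact sub_eq_zero.mp h0
    have hPu : P u = c • u := by
      rw [hP, prod_apply_eigen (q := q) A d (θ q d n) u hue n, ← hc]
    have hPvu : P (v - u) = 0 := by
      have hcu : c • u = P v := by
        rw [hu, smul_smul, mul_inv_cancel₀ hcne, one_smul]
      rw [map_sub, hPu, hcu, sub_self]
    have hvu := ih (v - u) hPvu
    have hveq : v = u + (v - u) := by abel
    rw [hveq]
    refine Submodule.add_mem _ ?_ ?_
    · exact Submodule.mem_iSup_of_mem n
        (Submodule.mem_iSup_of_mem (Finset.self_mem_range_succ n) huker)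
    · have hmono : (⨆ j ∈ Finset.range n,
            LinearMap.ker (A - θ q d j • (1 : Module.End ℂ W)))
          ≤ ⨆ j ∈ Finset.range (n+1),
            LinearMap.ker (A - θ q d j • (1 : Module.End ℂ W)) :=
        biSup_mono fun j hj => Finset.mem_range.mpr (Nat.lt_succ_of_lt (Finset.mem_range.mp hj))
      exact hmono hvu
  
/-- Main transfer lemma: the Weyl relation transfers the semisimple spectrum from A to B. -/
lemma weyl_shift (hq : q ≠ 0) (hroot : ∀ n : ℕ, 0 < n → q ^ n ≠ 1)
    (A B : Module.End ℂ W) (d : ℕ)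
    (rel : A * B = (q⁻¹ ^ 2) • (B * A) + (1 - q⁻¹ ^ 2) • (1 : Module.End ℂ W))
    (hA : ((List.range (d+1)).map (fun j : ℕ => A - θ q d j • (1 : Module.End ℂ W))).prod = 0) :
    ((List.range (d+1)).map (fun j : ℕ => B - θ q d j • (1 : Module.End ℂ W))).prod = 0 := by
  ext v
  simp only [LinearMap.zero_apply]
  have hv : v ∈ ⨆ j ∈ Finset.range (d+1),
      LinearMap.ker (A - θ q d j • (1 : Module.End ℂ W)) :=
    decomp A d hq hroot (d+1) v (by rw [hA]; rfl)
  set Q : Module.End ℂ W :=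
    ((List.range (d+1)).map (fun j : ℕ => B - θ q d j • (1 : Module.End ℂ W))).prod with hQ
  suffices h : (⨆ j ∈ Finset.range (d+1),
      LinearMap.ker (A - θ q d j • (1 : Module.End ℂ W))) ≤ LinearMap.ker Q by
    exact h hv
  refine iSup₂_le fun j hj => fun x hx => ?_
  have hjd : j < d + 1 := Finset.mem_range.mp hj
  have hxe : A x = θ q d j • x := by
    have hx' : (A - θ q d j • (1 : Module.End ℂ W)) x = 0 := hx
    have := sub_eq_zero.mp hx'
    simpa using this
  have hchain := chain A B d hq hroot rel hA (d + 1 - j) j (by omega) x hxe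
  have hsplit : List.range (d + 1)
      = List.range (d + 1 - j) ++ (List.range j).map ((d + 1 - j) + ·) := by
    rw [← List.range_add]
    congr 1
    omega
  rw [LinearMap.mem_ker, hQ, hsplit, List.map_append, List.prod_append]
  set P1 : Module.End ℂ W :=
    ((List.range (d+1-j)).map (fun i : ℕ => B - θ q d i • (1 : Module.End ℂ W))).prod with hP1
  set P2 : Module.End ℂ W :=
    (((List.range j).map ((d + 1 - j) + ·)).map
      (fun i : ℕ => B - θ q d i • (1 : Module.End ℂ W))).prod with hP2
  have hcomm : Commute P1 P2 := by
    refine Commute.list_prod_right _ _ fun y hy => ?_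
    obtain ⟨i, _, rfl⟩ := List.mem_map.mp hy
    refine (Commute.list_prod_right _ _ fun z hz => ?_).symm
    obtain ⟨i', _, rfl⟩ := List.mem_map.mp hz
    exact commute_shift B _ _
  rw [hcomm.eq, Module.End.mul_apply, hchain, map_zero]

/-- Normalize the q-Weyl relation. -/
lemma normalize_rel (hq : q ≠ 0) (h2 : q ^ 2 ≠ 1) {A B : Module.End ℂ W}
    (h : (q - q⁻¹)⁻¹ • (q • (A * B) - q⁻¹ • (B * A)) = 1) :
    A * B = (q⁻¹ ^ 2) • (B * A) + (1 - q⁻¹ ^ 2) • (1 : Module.End ℂ W) := by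
  have hs : q - q⁻¹ ≠ 0 := by
    intro h0
    apply h2
    have hqq : q = q⁻¹ := sub_eq_zero.mp h0
    calc q ^ 2 = q * q := sq q
    _ = q * q⁻¹ := by rw [← hqq]
    _ = 1 := mul_inv_cancel₀ hq
  have h' : q • (A * B) - q⁻¹ • (B * A) = (q - q⁻¹) • (1 : Module.End ℂ W) := by
    have hc := congrArg (fun E : Module.End ℂ W => (q - q⁻¹) • E) h
    simpa [smul_smul, mul_inv_cancel₀ hs] using hc
  have h'' : q • (A * B) = q⁻¹ • (B * A) + (q - q⁻¹) • (1 : Module.End ℂ W) := by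
    rw [sub_eq_iff_eq_add] at h'
    rw [h']
    abel
  have h3 : A * B = q⁻¹ • (q • (A * B)) := by
    rw [smul_smul, inv_mul_cancel₀ hq, one_smul]
  rw [h3, h'', smul_add, smul_smul, smul_smul]
  congr 1
  · rw [sq]
  · congr 1
    rw [mul_sub, inv_mul_cancel₀ hq, ← sq]

/-- Convert the coerced-list form of the product to the ℕ-indexed form. -/
lemma list_form {M : Type*} [Monoid M] (f : ℤ → M) (n : ℕ) :
    (List.map f (do let a ← List.range n; pure ((a : ℕ) : ℤ))).prod
      = ((List.range n).map (fun j : ℕ => f (j : ℤ))).prod := by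
  congr 1
  show List.map f ((List.range n).flatMap fun a => [((a : ℕ) : ℤ)]) = _
  rw [show (fun a : ℕ => [((a : ℕ) : ℤ)]) = pure ∘ (fun a : ℕ => (a : ℤ)) from rfl,
    List.flatMap_pure_eq_map, List.map_map]
  rfl

end Stmt17Aux

namespace Stmt17Aux

lemma pi_rel {W : Type} [AddCommGroup W] [Module ℂ W] {q : ℂ}
    (π : TetAlg q →ₐ[ℂ] Module.End ℂ W) {a b : FreeAlgebra ℂ TetGen}
    (h : TetRel q a b) :
    π (RingQuot.mkAlgHom ℂ (TetRel q) a) = π (RingQuot.mkAlgHom ℂ (TetRel q) b) := by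
  rw [RingQuot.mkAlgHom_rel ℂ h]

end Stmt17Aux

/-- On a finite-dimensional irreducible ⊠_q-module where x₀₁ and x₂₃ act semisimply with
eigenvalues among {q^{d-2j}}, every generator x_{i,i+1}, x_{i,i+2} acts semisimply with
eigenvalues among {q^{d-2j} : 0 ≤ j ≤ d}. -/
theorem stmt_17 (q : ℂ) (hq : q ≠ 0) (hroot : ∀ n : ℕ, 0 < n → q ^ n ≠ 1)
    (W : Type) [AddCommGroup W] [Module ℂ W] [FiniteDimensional ℂ W]
    (π : TetAlg q →ₐ[ℂ] Module.End ℂ W) (d : ℕ)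
    (hirr : ∀ U : Submodule ℂ W, (∀ a : TetAlg q, ∀ u ∈ U, π a u ∈ U) → U = ⊥ ∨ U = ⊤)
    (hx : (((List.range (d + 1)).map
        (fun j => π (tetX1 q 0) - (q ^ ((d : ℤ) - 2 * j)) • (1 : Module.End ℂ W))).prod = 0))
    (hy : (((List.range (d + 1)).map
        (fun j => π (tetX1 q 2) - (q ^ ((d : ℤ) - 2 * j)) • (1 : Module.End ℂ W))).prod = 0)) :
    ∀ i : ZMod 4,
      (((List.range (d + 1)).map
        (fun j => π (tetX1 q i) - (q ^ ((d : ℤ) - 2 * j)) • (1 : Module.End ℂ W))).prod = 0) ∧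
      (((List.range (d + 1)).map
        (fun j => π (tetX2 q i) - (q ^ ((d : ℤ) - 2 * j)) • (1 : Module.End ℂ W))).prod = 0) := by
  classical
  have hq2 : q ^ 2 ≠ 1 := hroot 2 (by norm_num)
  rw [Stmt17Aux.list_form] at hx hy
  have rel1 : ∀ h : ZMod 4, π (tetX1 q h) * π (tetX1 q (h+1))
      = (q⁻¹ ^ 2) • (π (tetX1 q (h+1)) * π (tetX1 q h))
        + (1 - q⁻¹ ^ 2) • (1 : Module.End ℂ W) := by
    intro h
    refine Stmt17Aux.normalize_rel hq hq2 ?_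
    have h1 := Stmt17Aux.pi_rel π (TetRel.qweyl11 (q := q) h)
    simpa only [tetX1, tetX2, map_smul, map_sub, map_mul, map_one] using h1
  have rel2 : ∀ h : ZMod 4, π (tetX1 q h) * π (tetX2 q (h+1))
      = (q⁻¹ ^ 2) • (π (tetX2 q (h+1)) * π (tetX1 q h))
        + (1 - q⁻¹ ^ 2) • (1 : Module.End ℂ W) := by
    intro h
    refine Stmt17Aux.normalize_rel hq hq2 ?_
    have h1 := Stmt17Aux.pi_rel π (TetRel.qweyl12 (q := q) h)
    simpa only [tetX1, tetX2, map_smul, map_sub, map_mul, map_one] using h1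
  have HX : ((List.range (d+1)).map
      (fun j : ℕ => π (tetX1 q 0) - Stmt17Aux.θ q d j • (1 : Module.End ℂ W))).prod = 0 := hx
  have HY : ((List.range (d+1)).map
      (fun j : ℕ => π (tetX1 q 2) - Stmt17Aux.θ q d j • (1 : Module.End ℂ W))).prod = 0 := hy
  have H1 : ((List.range (d+1)).map
      (fun j : ℕ => π (tetX1 q 1) - Stmt17Aux.θ q d j • (1 : Module.End ℂ W))).prod = 0 := by
    refine Stmt17Aux.weyl_shift hq hroot _ _ d ?_ HX
    have := rel1 0
    rwa [show (0 : ZMod 4) + 1 = 1 from rfl] at this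
  have H3 : ((List.range (d+1)).map
      (fun j : ℕ => π (tetX1 q 3) - Stmt17Aux.θ q d j • (1 : Module.End ℂ W))).prod = 0 := by
    refine Stmt17Aux.weyl_shift hq hroot _ _ d ?_ HY
    have := rel1 2
    rwa [show (2 : ZMod 4) + 1 = 3 from rfl] at this
  have HT1 : ∀ i : ZMod 4, ((List.range (d+1)).map
      (fun j : ℕ => π (tetX1 q i) - Stmt17Aux.θ q d j • (1 : Module.End ℂ W))).prod = 0 := by
    intro i
    fin_cases i
    · exact HX
    · exact H1
    · exact HY
    · exact H3
  have HT2 : ∀ i : ZMod 4, ((List.range (d+1)).map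
      (fun j : ℕ => π (tetX2 q i) - Stmt17Aux.θ q d j • (1 : Module.End ℂ W))).prod = 0 := by
    intro i
    have h0 := Stmt17Aux.weyl_shift hq hroot _ _ d (rel2 (i + 3)) (HT1 (i + 3))
    rwa [show i + 3 + 1 = i from by rw [add_assoc, show (3 : ZMod 4) + 1 = 0 from rfl, add_zero]] at h0
  intro i
  constructor
  · rw [Stmt17Aux.list_form]
    exact HT1 i
  · rw [Stmt17Aux.list_form]
    exact HT2 i

end
end

section
/- Let q ∈ ℂ with q ≠ 0, q^2 ≠ 1, and let U be an algebra with elements x, y, z satisfying (qxy - q^{-1}yx)/(q - q^{-1}) = 1, (qyz - q^{-1}zy)/(q - q^{-1}) = 1, (qzx - q^{-1}xz)/(q - q^{-1}) = 1, where x is invertible. Then with K = x, e^- = y - x^{-1}, e^+ = (1 - xz)q^{-1}(q - q^{-1})^{-2}, one has K e^- K^{-1} = q^{-2} e^- and K e^+ K^{-1} = q^{2} e^+. -/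
/-- From the equitable relations with x invertible, K = x, e⁻ = y - x⁻¹,
e⁺ = (1-xz)q⁻¹(q-q⁻¹)⁻² satisfy K e⁻ K⁻¹ = q⁻² e⁻ and K e⁺ K⁻¹ = q² e⁺. -/
theorem stmt_18 (A : Type) [Ring A] [Algebra ℂ A]
    (q : ℂ) (hq : q ≠ 0) (hq2 : q ^ 2 ≠ 1)
    (x xinv y z : A)
    (h1 : x * xinv = 1) (h1' : xinv * x = 1)
    (hxy : (q - q⁻¹)⁻¹ • (q • (x * y) - q⁻¹ • (y * x)) = 1)
    (hyz : (q - q⁻¹)⁻¹ • (q • (y * z) - q⁻¹ • (z * y)) = 1)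
    (hzx : (q - q⁻¹)⁻¹ • (q • (z * x) - q⁻¹ • (x * z)) = 1) :
    let K := x
    let Kinv := xinv
    let em := y - xinv
    let ep := (q⁻¹ * ((q - q⁻¹) ^ 2)⁻¹) • (1 - x * z)
    K * em * Kinv = (q⁻¹ ^ 2) • em ∧
    K * ep * Kinv = (q ^ 2) • ep := by
  intro K Kinv em ep
  have hc : q - q⁻¹ ≠ 0 := by
    intro h
    apply hq2
    have hqq : q = q⁻¹ := by linear_combination h
    rw [sq]
    nth_rewrite 2 [hqq]
    exact mul_inv_cancel₀ hq
  have hExy : q • (x * y) - q⁻¹ • (y * x) = (q - q⁻¹) • (1 : A) := by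
    have := congrArg (fun a => (q - q⁻¹) • a) hxy
    simpa [smul_smul, mul_inv_cancel₀ hc] using this
  have hEzx : q • (z * x) - q⁻¹ • (x * z) = (q - q⁻¹) • (1 : A) := by
    have := congrArg (fun a => (q - q⁻¹) • a) hzx
    simpa [smul_smul, mul_inv_cancel₀ hc] using this
  have hxy2 : x * y = (q⁻¹ * q⁻¹) • (y * x) + (1 - q⁻¹ * q⁻¹) • (1 : A) := by
    have := congrArg (fun a => q⁻¹ • a) hExy
    simp only [smul_sub, smul_smul, inv_mul_cancel₀ hq, one_smul] at this
    have h2 : q⁻¹ * (q - q⁻¹) = 1 - q⁻¹ * q⁻¹ := by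
      field_simp
    rw [h2] at this
    linear_combination (norm := module) this
  have hzx2 : x * z = (q * q) • (z * x) - (q * q - 1) • (1 : A) := by
    have := congrArg (fun a => q • a) hEzx
    simp only [smul_sub, smul_smul, mul_inv_cancel₀ hq, one_smul] at this
    have h2 : q * (q - q⁻¹) = q * q - 1 := by
      field_simp
    rw [h2] at this
    linear_combination (norm := module) -this
  constructor
  · show x * (y - xinv) * xinv = (q⁻¹ ^ 2) • (y - xinv)
    have : x * (y - xinv) * xinv = x * y * xinv - xinv := by
      rw [mul_sub, h1, sub_mul, one_mul]
    rw [this, hxy2, add_mul, smul_mul_assoc, smul_mul_assoc, mul_assoc, h1, mul_one,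
      one_mul]
    rw [sq]
    module
  · show x * ((q⁻¹ * ((q - q⁻¹) ^ 2)⁻¹) • (1 - x * z)) * xinv
      = (q ^ 2) • ((q⁻¹ * ((q - q⁻¹) ^ 2)⁻¹) • (1 - x * z))
    have key : x * (1 - x * z) * xinv = (q ^ 2) • (1 - x * z) := by
      have step : x * (1 - x * z) * xinv = 1 - x * (x * z) * xinv := by
        rw [mul_sub, mul_one, sub_mul, h1, mul_assoc]
      rw [step, hzx2, mul_sub, sub_mul, mul_smul_comm, smul_mul_assoc, mul_smul_comm,
        smul_mul_assoc, mul_one, h1]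
      have : x * (z * x) * xinv = x * z := by
        rw [← mul_assoc, mul_assoc (x*z) x xinv, h1, mul_one]
      rw [this, hzx2, sq]
      module
    calc x * ((q⁻¹ * ((q - q⁻¹) ^ 2)⁻¹) • (1 - x * z)) * xinv
        = (q⁻¹ * ((q - q⁻¹) ^ 2)⁻¹) • (x * (1 - x * z) * xinv) := by
          rw [mul_smul_comm, smul_mul_assoc]
      _ = (q ^ 2) • ((q⁻¹ * ((q - q⁻¹) ^ 2)⁻¹) • (1 - x * z)) := by
          rw [key, smul_smul, smul_smul, mul_comm]
end
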